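/- arXiv:1407.0490 — 8 statements merged into one kernel-verified Lean document; each statement's English description precedes it below -/
import Mathlib

section
/- Let (r_0, …, r_h) be a free sequence of positive integers and set N = (Σ_{k=1}^h (e_k − 1) r_k) − r_0 ∈ ℤ. Then every integer z > N belongs to Γ = ⟨r_0, …, r_h⟩ (viewed inside ℤ), and if N ≥ 0 then N ∉ Γ. In other words, the Frobenius number of Γ is (Σ_{k=1}^h (e_k − 1) r_k) − r_0. -/
/-- A sequence `r 0, …, r h` of positive integers, together with the chain of gcds
`d 1 = r 0`, `d (k+1) = gcd (d k) (r k)`, is *free* if `d (h+1) = 1` (so the `r k` are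
coprime) and `e_k · r_k ∈ ⟨r_0, …, r_{k−1}⟩` for all `1 ≤ k ≤ h`, where
`e k = d k / d (k+1)`. -/
def IsFreeSeq (h : ℕ) (r d : ℕ → ℕ) : Prop :=
  (∀ k ≤ h, 0 < r k) ∧
  d 1 = r 0 ∧
  (∀ k, 1 ≤ k → k ≤ h → d (k + 1) = Nat.gcd (d k) (r k)) ∧
  d (h + 1) = 1 ∧
  ∀ k, 1 ≤ k → k ≤ h →
    (d k / d (k + 1)) * r k ∈ AddSubmonoid.closure (r '' Set.Iio k)

/-!
Let `e_k = d_k / d_{k+1}` and let `A` be the set of sums `∑_{k=1}^h a_k r_k` with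
`0 ≤ a_k < e_k`. Bézout along the gcd chain shows that `A` meets every residue class modulo
`r_0`. Since `d_k` divides `r_0, …, r_{k-1}` and `e_k = d_k / gcd (d_k, r_k)`, the coefficient
of `r_k` in such a sum is determined by the class of the sum modulo `d_k`, hence modulo `r_0`;
so distinct elements of `A` are incongruent modulo `r_0`. Freeness
lets every element of `Γ` be written as `q r_0 + s` with `q ≥ 0` and `s ∈ A`: reduce the
coefficient of `r_k` modulo `e_k` and push the multiples of `e_k r_k` down into
`⟨r_0, …, r_{k-1}⟩`. So `A` is the Apéry set of `Γ` with respect to `r_0`, and the Frobenius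
number is `max A - r_0 = N`.
-/

open Finset

theorem exists_lt_div_gcd_mul_modEq {m c : ℕ} (hm : 0 < m) {z : ℤ} (hz : (m.gcd c : ℤ) ∣ z) :
    ∃ x < m / m.gcd c, (x * c : ℤ) ≡ z [ZMOD m] := by
  set e := m / m.gcd c
  have he : (0 : ℤ) < e := by
    exact_mod_cast Nat.div_pos (Nat.gcd_le_left c hm) (Nat.gcd_pos_of_pos_left c hm)
  have hec : (m : ℤ) ∣ e * c := by
    refine ⟨(c / m.gcd c : ℕ), ?_⟩
    exact_mod_cast (Nat.div_mul_right_comm (Nat.gcd_dvd_left m c) c).trans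
      (Nat.mul_div_assoc m (Nat.gcd_dvd_right m c))
  obtain ⟨t, rfl⟩ := hz
  set y := Nat.gcdB m c * t
  have hy := Int.emod_lt_of_pos y he
  have hy' := Int.emod_nonneg y he.ne'
  refine ⟨(y % e).toNat, by omega, ?_⟩
  rw [Int.toNat_of_nonneg hy', Int.modEq_iff_dvd, Nat.gcd_eq_gcd_ab, Int.emod_def]
  obtain ⟨u, hu⟩ := hec
  exact ⟨m.gcdA c * t + y / e * u, by linear_combination (y / e) * hu⟩

theorem AddSubmonoid.exists_add_nsmul_of_mem_closure_image_Iic {M : Type*} [AddCommMonoid M]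
    {f : ℕ → M} {m : ℕ} {v : M} (hv : v ∈ closure (f '' Set.Iic m)) :
    ∃ w ∈ closure (f '' Set.Iio m), ∃ b : ℕ, v = w + b • f m := by
  rw [← Set.Iio_insert, Set.image_insert_eq, Set.insert_eq, closure_union, mem_sup] at hv
  obtain ⟨y, hy, w, hw, rfl⟩ := hv
  obtain ⟨b, rfl⟩ := mem_closure_singleton.1 hy
  exact ⟨w, hw, b, add_comm _ _⟩

def IsGcdChain (h : ℕ) (r d : ℕ → ℕ) : Prop :=
  0 < d 1 ∧ ∀ k, 1 ≤ k → k ≤ h → d (k + 1) = Nat.gcd (d k) (r k)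

/-- The sums `∑_{k=1}^m a_k r_k` with `0 ≤ a_k < d k / d (k+1)`. -/
def canonicalSums (r d : ℕ → ℕ) : ℕ → Set ℕ
  | 0 => {0}
  | m + 1 => {s | ∃ t ∈ canonicalSums r d m, ∃ x < d (m + 1) / d (m + 2), s = t + x * r (m + 1)}

def maxCanonicalSum (r d : ℕ → ℕ) (m : ℕ) : ℕ :=
  ∑ k ∈ Icc 1 m, (d k / d (k + 1) - 1) * r k

section

variable {h m : ℕ} {r d : ℕ → ℕ}

theorem le_maxCanonicalSum_of_mem {s : ℕ} (hs : s ∈ canonicalSums r d m) :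
    s ≤ maxCanonicalSum r d m := by
  induction m generalizing s with
  | zero => obtain rfl : s = 0 := hs; exact Nat.zero_le _
  | succ m ih =>
    obtain ⟨t, ht, x, hx, rfl⟩ := hs
    rw [maxCanonicalSum, sum_Icc_succ_top (by omega)]
    exact add_le_add (ih ht) (Nat.mul_le_mul_right _ (Nat.le_sub_one_of_lt hx))

theorem maxCanonicalSum_mem (he : ∀ k ∈ Icc 1 m, 0 < d k / d (k + 1)) :
    maxCanonicalSum r d m ∈ canonicalSums r d m := by
  induction m with
  | zero => rfl
  | succ m ih =>
    rw [maxCanonicalSum, sum_Icc_succ_top (by omega)]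
    exact ⟨_, ih fun k hk => he k (Icc_subset_Icc_right (by omega) hk), _,
      Nat.sub_one_lt (he (m + 1) (by simp)).ne', rfl⟩

theorem mem_closure_of_mem_canonicalSums {s : ℕ} (hs : s ∈ canonicalSums r d m) :
    s ∈ AddSubmonoid.closure (r '' Set.Iic m) := by
  induction m generalizing s with
  | zero => obtain rfl : s = 0 := hs; exact zero_mem _
  | succ m ih =>
    obtain ⟨t, ht, x, -, rfl⟩ := hs
    refine add_mem (AddSubmonoid.closure_mono (Set.image_mono (Set.Iic_subset_Iic.2 m.le_succ))
      (ih ht)) ?_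
    simpa using nsmul_mem (AddSubmonoid.subset_closure (Set.mem_image_of_mem r Set.self_mem_Iic)) x

theorem IsGcdChain.pos (hc : IsGcdChain h r d) {k : ℕ} (hk : 1 ≤ k) (hkh : k ≤ h + 1) :
    0 < d k := by
  induction k, hk using Nat.le_induction with
  | base => exact hc.1
  | succ k hk ih =>
    rw [hc.2 k hk (by omega)]
    exact Nat.gcd_pos_of_pos_left _ (ih (by omega))

theorem IsGcdChain.dvd_first (hc : IsGcdChain h r d) {k : ℕ} (hk : 1 ≤ k) (hkh : k ≤ h + 1) :
    d k ∣ d 1 := by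
  induction k, hk using Nat.le_induction with
  | base => exact dvd_rfl
  | succ k hk ih =>
    rw [hc.2 k hk (by omega)]
    exact (Nat.gcd_dvd_left _ _).trans (ih (by omega))

theorem IsGcdChain.div_succ_pos (hc : IsGcdChain h r d) {k : ℕ} (hk : k ∈ Icc 1 h) :
    0 < d k / d (k + 1) := by
  obtain ⟨hk, hkh⟩ := mem_Icc.1 hk
  exact Nat.div_pos (Nat.le_of_dvd (hc.pos hk (by omega)) (hc.2 k hk hkh ▸ Nat.gcd_dvd_left _ _))
    (hc.pos (by omega) (by omega))

theorem IsGcdChain.dvd_of_mem_canonicalSums (hc : IsGcdChain h r d) {s : ℕ} (hm : m ≤ h)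
    (hs : s ∈ canonicalSums r d m) : d (m + 1) ∣ s := by
  induction m generalizing s with
  | zero => obtain rfl : s = 0 := hs; exact dvd_zero _
  | succ m ih =>
    obtain ⟨t, ht, x, -, rfl⟩ := hs
    rw [hc.2 (m + 1) (by omega) hm]
    exact dvd_add ((Nat.gcd_dvd_left _ _).trans (ih (by omega) ht))
      (dvd_mul_of_dvd_right (Nat.gcd_dvd_right _ _) x)

theorem IsGcdChain.eq_of_modEq (hc : IsGcdChain h r d) {s s' : ℕ} (hm : m ≤ h)
    (hs : s ∈ canonicalSums r d m) (hs' : s' ∈ canonicalSums r d m)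
    (hss' : s ≡ s' [MOD d 1]) : s = s' := by
  induction m generalizing s s' with
  | zero => obtain rfl : s = 0 := hs; obtain rfl : s' = 0 := hs'; rfl
  | succ m ih =>
    obtain ⟨t, ht, x, hx, rfl⟩ := hs
    obtain ⟨t', ht', x', hx', rfl⟩ := hs'
    have hgcd := hc.2 (m + 1) (by omega) hm
    have ht0 := (Nat.modEq_zero_iff_dvd.2 (hc.dvd_of_mem_canonicalSums (by omega) ht)).add_right
      (x * r (m + 1))
    have ht0' := (Nat.modEq_zero_iff_dvd.2 (hc.dvd_of_mem_canonicalSums (by omega) ht')).add_right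
      (x' * r (m + 1))
    have hxx : x * r (m + 1) ≡ x' * r (m + 1) [MOD d (m + 1)] := by
      simpa using ht0.symm.trans ((hss'.of_dvd (hc.dvd_first (by omega) (by omega))).trans ht0')
    obtain rfl : x = x' := (hxx.cancel_right_div_gcd (hc.pos (by omega) (by omega))).eq_of_lt_of_lt
      (hgcd ▸ hx) (hgcd ▸ hx')
    rw [ih (by omega) ht ht' (Nat.ModEq.add_right_cancel' _ hss')]

theorem IsGcdChain.exists_mem_canonicalSums_modEq (hc : IsGcdChain h r d) (hm : m ≤ h)
    {z : ℤ} (hz : (d (m + 1) : ℤ) ∣ z) : ∃ s ∈ canonicalSums r d m, (s : ℤ) ≡ z [ZMOD d 1] := by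
  induction m generalizing z with
  | zero => exact ⟨0, rfl, Int.modEq_iff_dvd.2 (by simpa using hz)⟩
  | succ m ih =>
    have hgcd := hc.2 (m + 1) (by omega) hm
    rw [hgcd] at hz
    obtain ⟨x, hx, hxz⟩ := exists_lt_div_gcd_mul_modEq (hc.pos (by omega) (by omega)) hz
    obtain ⟨t, ht, htz⟩ := ih (by omega) hxz.dvd
    refine ⟨t + x * r (m + 1), ⟨t, ht, x, hgcd ▸ hx, rfl⟩, ?_⟩
    push_cast
    simpa using htz.add_right ((x : ℤ) * r (m + 1))

theorem IsFreeSeq.isGcdChain (hf : IsFreeSeq h r d) : IsGcdChain h r d :=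
  ⟨hf.2.1 ▸ hf.1 0 (Nat.zero_le h), hf.2.2.1⟩

theorem IsFreeSeq.exists_eq_mul_add_of_mem_closure (hf : IsFreeSeq h r d) {v : ℕ} (hm : m ≤ h)
    (hv : v ∈ AddSubmonoid.closure (r '' Set.Iic m)) :
    ∃ q, ∃ s ∈ canonicalSums r d m, v = q * r 0 + s := by
  have hc := hf.isGcdChain
  obtain ⟨-, -, -, -, hmem⟩ := hf
  induction m generalizing v with
  | zero =>
    obtain ⟨w, hw, b, rfl⟩ := AddSubmonoid.exists_add_nsmul_of_mem_closure_image_Iic hv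
    rw [show Set.Iio 0 = (∅ : Set ℕ) from Set.Iio_bot, Set.image_empty,
      AddSubmonoid.closure_empty, AddSubmonoid.mem_bot] at hw
    exact ⟨b, 0, rfl, by simp [hw]⟩
  | succ m ih =>
    obtain ⟨w, hw, b, rfl⟩ := AddSubmonoid.exists_add_nsmul_of_mem_closure_image_Iic hv
    set e := d (m + 1) / d (m + 2)
    have he : 0 < e := hc.div_succ_pos (mem_Icc.2 ⟨by omega, hm⟩)
    have hw' : w + b / e * (e * r (m + 1)) ∈ AddSubmonoid.closure (r '' Set.Iic m) := by
      rw [← Set.Iio_add_one_eq_Iic]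
      exact add_mem hw (by simpa using nsmul_mem (hmem (m + 1) (by omega) hm) (b / e))
    obtain ⟨q, t, ht, hq⟩ := ih (by omega) hw'
    refine ⟨q, t + b % e * r (m + 1), ⟨t, ht, _, Nat.mod_lt _ he, rfl⟩, ?_⟩
    calc w + b • r (m + 1) = (w + b / e * (e * r (m + 1))) + b % e * r (m + 1) := by
          nth_rw 1 [← Nat.div_add_mod b e]; simp only [smul_eq_mul]; ring
      _ = _ := by rw [hq]; ring

theorem IsFreeSeq.cast_maxCanonicalSum (hf : IsFreeSeq h r d) :
    (maxCanonicalSum r d h : ℤ) = ∑ k ∈ Icc 1 h, (((d k / d (k + 1) : ℕ) : ℤ) - 1) * (r k : ℤ) := by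
  rw [maxCanonicalSum, Nat.cast_sum]
  refine sum_congr rfl fun k hk => ?_
  rw [Nat.cast_mul, Nat.cast_sub (hf.isGcdChain.div_succ_pos hk), Nat.cast_one]

theorem IsFreeSeq.exists_mem_closure_of_lt (hf : IsFreeSeq h r d) {z : ℤ}
    (hz : (maxCanonicalSum r d h : ℤ) - r 0 < z) :
    ∃ v ∈ AddSubmonoid.closure (r '' Set.Iic h), (v : ℤ) = z := by
  have hc := hf.isGcdChain
  obtain ⟨hpos, hd1, -, hd_last, -⟩ := hf
  obtain ⟨s, hs, hsz⟩ := hc.exists_mem_canonicalSums_modEq le_rfl (z := z)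
    (by rw [hd_last, Nat.cast_one]; exact one_dvd z)
  obtain ⟨q, hq⟩ := hsz.dvd
  rw [hd1] at hq
  have hs_le : (s : ℤ) ≤ maxCanonicalSum r d h := by exact_mod_cast le_maxCanonicalSum_of_mem hs
  have hr0 : (0 : ℤ) < r 0 := by exact_mod_cast hpos 0 (Nat.zero_le h)
  have hq0 : 0 ≤ q := by nlinarith
  refine ⟨q.toNat * r 0 + s, add_mem (nsmul_mem ?_ _) (mem_closure_of_mem_canonicalSums hs), ?_⟩
  · exact AddSubmonoid.subset_closure (Set.mem_image_of_mem r (Set.mem_Iic.2 (Nat.zero_le h)))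
  · push_cast
    rw [Int.toNat_of_nonneg hq0]
    linarith

theorem IsFreeSeq.not_exists_mem_closure_eq (hf : IsFreeSeq h r d) :
    ¬ ∃ v ∈ AddSubmonoid.closure (r '' Set.Iic h), (v : ℤ) = maxCanonicalSum r d h - r 0 := by
  rintro ⟨v, hv, hvN⟩
  have hc := hf.isGcdChain
  obtain ⟨q, s, hs, rfl⟩ := hf.exists_eq_mul_add_of_mem_closure le_rfl hv
  obtain ⟨hpos, hd1, -⟩ := hf
  have hmax : maxCanonicalSum r d h = s + (q + 1) * r 0 := by
    push_cast at hvN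
    exact_mod_cast (by linarith : (maxCanonicalSum r d h : ℤ) = s + (q + 1) * r 0)
  have hs_eq : s = maxCanonicalSum r d h :=
    hc.eq_of_modEq le_rfl hs (maxCanonicalSum_mem fun _ hk => hc.div_succ_pos hk)
      (hd1 ▸ hmax ▸ (Nat.add_mul_mod_self_right s (q + 1) (r 0)).symm)
  have := Nat.mul_pos (show 0 < q + 1 by omega) (hpos 0 (Nat.zero_le h))
  omega

end

/-- The Frobenius number of the numerical semigroup generated by a free sequence is
`N = (Σ_{k=1}^h (e_k − 1) r_k) − r_0`: every integer `z > N` lies in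
`Γ = ⟨r_0, …, r_h⟩`, and if `N ≥ 0` then `N ∉ Γ`. -/
theorem frobenius_number_of_free_sequence (h : ℕ) (r d : ℕ → ℕ)
    (hfree : IsFreeSeq h r d) (N : ℤ)
    (hN : N = (∑ k ∈ Finset.Icc 1 h, (((d k / d (k + 1) : ℕ) : ℤ) - 1) * (r k : ℤ))
      - (r 0 : ℤ)) :
    (∀ z : ℤ, N < z → ∃ v ∈ AddSubmonoid.closure (r '' Set.Iic h), (v : ℤ) = z) ∧
    (0 ≤ N → ¬ ∃ v ∈ AddSubmonoid.closure (r '' Set.Iic h), (v : ℤ) = N) := by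
  rw [← hfree.cast_maxCanonicalSum] at hN
  subst hN
  exact ⟨fun _ hz => hfree.exists_mem_closure_of_lt hz, fun _ => hfree.not_exists_mem_closure_eq⟩
end

section
/- Let (r_0, …, r_h) be a free sequence of positive integers, Γ = ⟨r_0,…,r_h⟩, and N = (Σ_{k=1}^h (e_k − 1) r_k) − r_0 ∈ ℤ. Then Γ is symmetric: for every integer z, z ∈ Γ if and only if N − z ∉ Γ (where Γ ⊆ ℕ is viewed as a subset of ℤ). -/
/-!
Every integer `z` has a unique *standard representation* `z = q r₀ + ∑_{k=1}^h a_k r_k` with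
`q ∈ ℤ` and `0 ≤ a_k < e_k`: descending the gcd chain `d_{k+1} = gcd (d_k, r_k)`, the coefficient
`a_k` is determined modulo `e_k = d_k / d_{k+1}`. Using the relations `e_k r_k ∈ ⟨r_0, …, r_{k-1}⟩`,
every element of `Γ` can be rewritten in standard form with nonnegative coefficients, so `z ∈ Γ`
iff `q ≥ 0`. The standard representation of `N - z` has coefficients `-1 - q` and `e_k - 1 - a_k`,
hence exactly one of `z` and `N - z` lies in `Γ`.
-/

theorem Int.exists_lt_dvd_sub_mul {D R : ℕ} (hD : 0 < D) {z : ℤ} (hz : (D.gcd R : ℤ) ∣ z) :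
    ∃ t < D / D.gcd R, (D : ℤ) ∣ z - t * R := by
  have hg : 0 < D.gcd R := Nat.gcd_pos_of_pos_left R hD
  set e := D / D.gcd R
  have he : 0 < e := Nat.div_pos (Nat.gcd_le_left R hD) hg
  have hDeR : (D : ℤ) ∣ e * R := by
    refine Int.natCast_dvd_natCast.mpr ⟨R / D.gcd R, ?_⟩
    rw [Nat.div_mul_right_comm (Nat.gcd_dvd_left D R), Nat.mul_div_assoc _ (Nat.gcd_dvd_right D R)]
  obtain ⟨w, rfl⟩ := hz
  set y := w * D.gcdB R
  have hy : 0 ≤ y % e := Int.emod_nonneg _ (by positivity)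
  refine ⟨(y % e).toNat, by have := Int.emod_lt_of_pos y (Int.natCast_pos.mpr he); omega, ?_⟩
  -- Bézout `gcd D R = D A + R B`, and `y - y % e` is a multiple of `e`, while `D ∣ e R`
  have hsplit : (D.gcd R : ℤ) * w - ((y % e).toNat : ℤ) * R
      = D * (D.gcdA R * w) + (y / e) * (e * R) := by
    rw [Int.toNat_of_nonneg hy, Int.emod_def, Nat.gcd_eq_gcd_ab]
    ring
  rw [hsplit]
  exact dvd_add (dvd_mul_right _ _) (hDeR.mul_left _)

theorem Int.eq_zero_of_dvd_mul_of_natAbs_lt {D R : ℕ} {x : ℤ} (hdvd : (D : ℤ) ∣ x * R)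
    (hx : x.natAbs < D / D.gcd R) : x = 0 := by
  have hD : 0 < D := Nat.pos_of_ne_zero (by rintro rfl; simp at hx)
  have hg : 0 < D.gcd R := Nat.gcd_pos_of_pos_left R hD
  have hdvd' : D ∣ x.natAbs * R := by
    simpa [Int.natAbs_mul] using Int.natAbs_dvd_natAbs.mpr hdvd
  have key : D / D.gcd R ∣ x.natAbs * (R / D.gcd R) := by
    apply Nat.dvd_of_mul_dvd_mul_left hg
    rwa [Nat.mul_div_cancel' (Nat.gcd_dvd_left D R), mul_left_comm,
      Nat.mul_div_cancel' (Nat.gcd_dvd_right D R)]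
  have := (Nat.coprime_div_gcd_div_gcd hg).dvd_of_dvd_mul_right key
  exact Int.natAbs_eq_zero.mp (Nat.eq_zero_of_dvd_of_lt this hx)

open Finset

namespace IsFreeSeq

variable {h : ℕ} {r d : ℕ → ℕ}

theorem d_pos (hf : IsFreeSeq h r d) {k : ℕ} (hk1 : 1 ≤ k) (hk : k ≤ h + 1) : 0 < d k := by
  induction k, hk1 using Nat.le_induction with
  | base => exact hf.2.1 ▸ hf.1 0 (Nat.zero_le h)
  | succ k hk1 _ => exact hf.2.2.1 k hk1 (by omega) ▸ Nat.gcd_pos_of_pos_right _ (hf.1 k (by omega))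

theorem d_dvd_d (hf : IsFreeSeq h r d) {j k : ℕ} (hj : 1 ≤ j) (hjk : j ≤ k) (hk : k ≤ h + 1) :
    d k ∣ d j := by
  induction k, hjk using Nat.le_induction with
  | base => rfl
  | succ k hjk ih =>
    exact hf.2.2.1 k (by omega) (by omega) ▸ (Nat.gcd_dvd_left _ _).trans (ih (by omega))

theorem d_dvd_r (hf : IsFreeSeq h r d) {j k : ℕ} (hjk : j < k) (hk : k ≤ h + 1) : d k ∣ r j := by
  rcases Nat.eq_zero_or_pos j with rfl | hj
  · exact hf.2.1 ▸ hf.d_dvd_d le_rfl hjk hk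
  · exact (hf.d_dvd_d (by omega) hjk hk).trans
      (hf.2.2.1 j hj (by omega) ▸ Nat.gcd_dvd_right _ _)

theorem d_div_d_succ_pos (hf : IsFreeSeq h r d) {k : ℕ} (hk1 : 1 ≤ k) (hk : k ≤ h) :
    0 < d k / d (k + 1) :=
  Nat.div_pos (Nat.le_of_dvd (hf.d_pos hk1 (by omega)) (hf.d_dvd_d hk1 k.le_succ (by omega)))
    (hf.d_pos (by omega) (by omega))

theorem eqOn_of_dvd_sum_sub (hf : IsFreeSeq h r d) {m : ℕ} (hm : m ≤ h) {a b : ℕ → ℕ}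
    (ha : ∀ k ∈ Icc 1 m, a k < d k / d (k + 1)) (hb : ∀ k ∈ Icc 1 m, b k < d k / d (k + 1))
    (hdvd : (r 0 : ℤ) ∣ ∑ k ∈ Icc 1 m, ((a k : ℤ) - b k) * r k) :
    ∀ k ∈ Icc 1 m, a k = b k := by
  induction m with
  | zero => simp
  | succ m ih =>
    rw [sum_Icc_succ_top (by omega)] at hdvd
    have htop : a (m + 1) = b (m + 1) := by
      have hlow : (d (m + 1) : ℤ) ∣ ∑ k ∈ Icc 1 m, ((a k : ℤ) - b k) * r k :=
        dvd_sum fun k hk => (Int.natCast_dvd_natCast.mpr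
          (hf.d_dvd_r (by simp at hk; omega) (by omega))).mul_left _
      have hr0 : (d (m + 1) : ℤ) ∣ r 0 :=
        Int.natCast_dvd_natCast.mpr (hf.d_dvd_r (by omega) (by omega))
      have hD := (dvd_add_right hlow).mp (hr0.trans hdvd)
      have hlt : ((a (m + 1) : ℤ) - b (m + 1)).natAbs <
          d (m + 1) / (d (m + 1)).gcd (r (m + 1)) := by
        have := ha (m + 1) (by simp)
        have := hb (m + 1) (by simp)
        rw [← hf.2.2.1 (m + 1) (by omega) hm]
        omega
      have := Int.eq_zero_of_dvd_mul_of_natAbs_lt hD hlt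
      omega
    have hsub : Icc 1 m ⊆ Icc 1 (m + 1) := Icc_subset_Icc_right m.le_succ
    intro k hk
    rcases (mem_Icc.mp hk).2.lt_or_eq with hkm | rfl
    · refine ih (by omega) (fun k hk => ha k (hsub hk)) (fun k hk => hb k (hsub hk))
        (by simpa [htop] using hdvd) k (mem_Icc.mpr ⟨(mem_Icc.mp hk).1, by omega⟩)
    · exact htop

theorem exists_coeff_dvd_sub_sum (hf : IsFreeSeq h r d) {m : ℕ} (hm : m ≤ h) {z : ℤ}
    (hz : (d (m + 1) : ℤ) ∣ z) :
    ∃ a : ℕ → ℕ, (∀ k ∈ Icc 1 m, a k < d k / d (k + 1)) ∧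
      (r 0 : ℤ) ∣ z - ∑ k ∈ Icc 1 m, (a k : ℤ) * r k := by
  induction m generalizing z with
  | zero => exact ⟨0, by simp, by simpa [hf.2.1] using hz⟩
  | succ m ih =>
    have hgcd := hf.2.2.1 (m + 1) (by omega) hm
    rw [hgcd] at hz
    obtain ⟨t, ht, htz⟩ := Int.exists_lt_dvd_sub_mul (hf.d_pos (by omega) (by omega)) hz
    obtain ⟨a, ha, hdvd⟩ := ih (by omega) htz
    refine ⟨Function.update a (m + 1) t, fun k hk => ?_, ?_⟩
    · rcases eq_or_ne k (m + 1) with rfl | hkm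
      · simpa [hgcd] using ht
      · rw [Function.update_of_ne hkm]
        exact ha k (mem_Icc.mpr ⟨(mem_Icc.mp hk).1, by grind⟩)
    · rw [sum_Icc_succ_top (by omega), Function.update_self,
        sum_congr rfl fun k hk => by rw [Function.update_of_ne (by grind)]]
      convert hdvd using 1
      ring

theorem exists_eq_mul_add_sum (hf : IsFreeSeq h r d) (z : ℤ) :
    ∃ q : ℤ, ∃ a : ℕ → ℕ, (∀ k ∈ Icc 1 h, a k < d k / d (k + 1)) ∧
      z = q * r 0 + ∑ k ∈ Icc 1 h, (a k : ℤ) * r k := by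
  obtain ⟨a, ha, q, hq⟩ :=
    hf.exists_coeff_dvd_sub_sum (m := h) le_rfl (z := z) (by rw [hf.2.2.2.1]; exact one_dvd z)
  exact ⟨q, a, ha, by linear_combination hq⟩

theorem exists_coeff_of_mem_closure (hf : IsFreeSeq h r d) {m : ℕ} (hm : m ≤ h) {v : ℕ}
    (hv : v ∈ AddSubmonoid.closure (r '' Set.Iic m)) :
    ∃ a : ℕ → ℕ, (∀ k ∈ Icc 1 m, a k < d k / d (k + 1)) ∧
      v = a 0 * r 0 + ∑ k ∈ Icc 1 m, a k * r k := by
  induction m generalizing v with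
  | zero =>
    have hv0 : v ∈ AddSubmonoid.closure {r 0} := by
      rwa [← Set.image_singleton, ← Nat.bot_eq_zero, ← Set.Iic_bot]
    obtain ⟨n, rfl⟩ := AddSubmonoid.mem_closure_singleton.mp hv0
    exact ⟨fun _ => n, by simp, by simp⟩
  | succ m ih =>
    have himage : r '' Set.Iic (m + 1) = {r (m + 1)} ∪ r '' Set.Iic m := by
      rw [← Set.image_singleton, ← Set.image_union, ← Set.insert_eq]
      congr 1
      ext k
      simp only [Set.mem_Iic, Set.mem_insert_iff]
      omega
    rw [himage, AddSubmonoid.closure_union, AddSubmonoid.mem_sup] at hv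
    obtain ⟨_, hn, u, hu, rfl⟩ := hv
    obtain ⟨n, rfl⟩ := AddSubmonoid.mem_closure_singleton.mp hn
    set e := d (m + 1) / d (m + 2)
    have he : 0 < e := hf.d_div_d_succ_pos (by omega) hm
    have hmem : e * r (m + 1) ∈ AddSubmonoid.closure (r '' Set.Iic m) := by
      simpa [Set.Iio_add_one_eq_Iic] using hf.2.2.2.2 (m + 1) (by omega) hm
    -- reduce `n` modulo `e`, moving the multiple of `e * r (m + 1)` down to lower generators
    obtain ⟨a, ha, hsum⟩ := ih (by omega) (add_mem (AddSubmonoid.nsmul_mem _ hmem (n / e)) hu)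
    refine ⟨Function.update a (m + 1) (n % e), fun k hk => ?_, ?_⟩
    · rcases eq_or_ne k (m + 1) with rfl | hkm
      · simpa using Nat.mod_lt n he
      · rw [Function.update_of_ne hkm]
        exact ha k (mem_Icc.mpr ⟨(mem_Icc.mp hk).1, by grind⟩)
    · rw [sum_Icc_succ_top (by omega), Function.update_self, Function.update_of_ne (by omega),
        sum_congr rfl fun k hk => by rw [Function.update_of_ne (by grind)], ← add_assoc, ← hsum,
        smul_eq_mul, smul_eq_mul]
      conv_lhs => rw [← Nat.div_add_mod n e]
      ring

theorem exists_mem_closure_eq_iff_nonneg (hf : IsFreeSeq h r d) {a : ℕ → ℕ}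
    (ha : ∀ k ∈ Icc 1 h, a k < d k / d (k + 1)) (q : ℤ) :
    (∃ v ∈ AddSubmonoid.closure (r '' Set.Iic h),
      (v : ℤ) = q * r 0 + ∑ k ∈ Icc 1 h, (a k : ℤ) * r k) ↔ 0 ≤ q := by
  constructor
  · rintro ⟨v, hv, hvq⟩
    obtain ⟨b, hb, rfl⟩ := hf.exists_coeff_of_mem_closure le_rfl hv
    push_cast at hvq
    have hab := hf.eqOn_of_dvd_sum_sub le_rfl ha hb ⟨b 0 - q, by
      rw [sum_congr rfl fun k _ => sub_mul (a k : ℤ) (b k) (r k), sum_sub_distrib]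
      linear_combination -hvq⟩
    rw [sum_congr rfl fun k hk => by rw [← hab k hk]] at hvq
    have hr0 : (r 0 : ℤ) ≠ 0 := by exact_mod_cast (hf.1 0 (Nat.zero_le h)).ne'
    have := mul_right_cancel₀ hr0 (by linear_combination hvq : (b 0 : ℤ) * r 0 = q * r 0)
    omega
  · intro hq
    have hgen : ∀ k ≤ h, r k ∈ AddSubmonoid.closure (r '' Set.Iic h) :=
      fun k hk => AddSubmonoid.subset_closure ⟨k, hk, rfl⟩
    refine ⟨q.toNat * r 0 + ∑ k ∈ Icc 1 h, a k * r k,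
      add_mem (AddSubmonoid.nsmul_mem _ (hgen 0 (Nat.zero_le h)) _)
        (AddSubmonoid.sum_mem _ fun k hk => AddSubmonoid.nsmul_mem _ (hgen k (mem_Icc.mp hk).2) _),
      ?_⟩
    push_cast
    rw [Int.toNat_of_nonneg hq]

end IsFreeSeq

/-- The numerical semigroup `Γ = ⟨r_0, …, r_h⟩` generated by a free sequence is
*symmetric*: with `N = (Σ_{k=1}^h (e_k − 1) r_k) − r_0` (its Frobenius number), an
integer `z` lies in `Γ` if and only if `N − z` does not. -/
theorem free_sequence_symmetric (h : ℕ) (r d : ℕ → ℕ)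
    (hfree : IsFreeSeq h r d) (N : ℤ)
    (hN : N = (∑ k ∈ Finset.Icc 1 h, (((d k / d (k + 1) : ℕ) : ℤ) - 1) * (r k : ℤ))
      - (r 0 : ℤ)) :
    ∀ z : ℤ, (∃ v ∈ AddSubmonoid.closure (r '' Set.Iic h), (v : ℤ) = z) ↔
      ¬ ∃ v ∈ AddSubmonoid.closure (r '' Set.Iic h), (v : ℤ) = N - z := by
  intro z
  obtain ⟨q, a, ha, rfl⟩ := hfree.exists_eq_mul_add_sum z
  obtain ⟨b, hbdef⟩ : ∃ b : ℕ → ℕ, ∀ k, b k = d k / d (k + 1) - 1 - a k := ⟨_, fun _ => rfl⟩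
  have hb : ∀ k ∈ Icc 1 h, b k < d k / d (k + 1) := fun k hk => by
    have := ha k hk
    have := hbdef k
    omega
  have hNz : N - (q * r 0 + ∑ k ∈ Icc 1 h, (a k : ℤ) * r k)
      = (-1 - q) * r 0 + ∑ k ∈ Icc 1 h, (b k : ℤ) * r k := by
    have hbk : ∀ k ∈ Icc 1 h, (b k : ℤ) * r k = ((d k / d (k + 1) : ℕ) - 1) * r k - a k * r k :=
      fun k hk => by
        have := ha k hk
        have := hbdef k
        rw [show (b k : ℤ) = ((d k / d (k + 1) : ℕ) : ℤ) - 1 - a k by omega]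
        ring
    rw [hN, sum_congr rfl hbk, sum_sub_distrib]
    ring
  rw [hfree.exists_mem_closure_eq_iff_nonneg ha, hNz,
    hfree.exists_mem_closure_eq_iff_nonneg hb]
  omega
end

section
/- Let (r_0, …, r_h) be a free sequence of positive integers with h ≥ 1, and let C(S) denote the conductor of a submonoid S of ℕ with finite complement, i.e., the least c ∈ ℕ such that every integer ≥ c lies in S. Then (r_0/d_h, …, r_{h−1}/d_h) is again a free sequence and C(⟨r_0, …, r_h⟩) = d_h · C(⟨r_0/d_h, …, r_{h−1}/d_h⟩) + (r_h − 1)(d_h − 1). -/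
/-- The *conductor* of a submonoid `S` of `ℕ` (with finite complement): the least
`c ∈ ℕ` such that every integer `≥ c` lies in `S`. -/
noncomputable def conductorOf (S : AddSubmonoid ℕ) : ℕ :=
  sInf {c : ℕ | ∀ z : ℕ, c ≤ z → z ∈ S}

section Aux

lemma closure_image_div (dd : ℕ) (r : ℕ → ℕ) (A : Set ℕ) (hdvd : ∀ k ∈ A, dd ∣ r k) :
    AddSubmonoid.closure (r '' A)
      = ((AddSubmonoid.closure ((fun k => r k / dd) '' A)).map (AddMonoidHom.mulLeft dd)) := by
  rw [AddMonoidHom.map_mclosure, ← Set.image_comp]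
  congr 1
  apply Set.image_congr
  intro k hk
  simp [Function.comp, AddMonoidHom.mulLeft, Nat.mul_div_cancel' (hdvd k hk)]

lemma mem_map_mulLeft {dd x : ℕ} {S : AddSubmonoid ℕ} :
    x ∈ S.map (AddMonoidHom.mulLeft dd) ↔ ∃ s ∈ S, dd * s = x := by
  simp [AddSubmonoid.mem_map, AddMonoidHom.mulLeft]

lemma upper_mem (S' : AddSubmonoid ℕ) (dd ρ c' : ℕ) (hd : 0 < dd) (hρ : 0 < ρ)
    (hcop : Nat.gcd dd ρ = 1) (hc' : ∀ z, c' ≤ z → z ∈ S') :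
    ∀ z, dd * c' + (ρ - 1) * (dd - 1) ≤ z →
      z ∈ S'.map (AddMonoidHom.mulLeft dd) ⊔ AddSubmonoid.closure {ρ} := by
  intro z hz
  haveI : NeZero dd := ⟨hd.ne'⟩
  set n : ℕ := ((z : ZMod dd) * (ρ : ZMod dd)⁻¹).val with hn
  have hnlt : n < dd := ZMod.val_lt _
  have hunit : IsUnit (ρ : ZMod dd) := by
    have := (ZMod.unitOfCoprime ρ (Nat.Coprime.symm hcop)).isUnit
    rwa [ZMod.coe_unitOfCoprime] at this
  have hcast : ((n * ρ : ℕ) : ZMod dd) = (z : ZMod dd) := by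
    push_cast
    rw [hn, ZMod.natCast_val, ZMod.cast_id]
    rw [mul_assoc, ZMod.inv_mul_of_unit _ hunit, mul_one]
  have hmod : n * ρ ≡ z [MOD dd] := (ZMod.natCast_eq_natCast_iff _ _ _).mp hcast
  obtain ⟨q, hq⟩ := hmod.dvd
  have hq' : (z : ℤ) - n * ρ = dd * q := by push_cast at hq; linarith
  have hzZ : (dd : ℤ) * c' + (ρ - 1) * (dd - 1) ≤ z := by
    have := hz
    have h1 : ((ρ - 1) * (dd - 1) : ℕ) = ((ρ : ℤ) - 1) * ((dd : ℤ) - 1) := by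
      push_cast [Nat.cast_sub hρ, Nat.cast_sub hd]; ring
    omega
  have hqge : (c' : ℤ) ≤ q := by
    have hnle : (n : ℤ) ≤ (dd : ℤ) - 1 := by
      have h2 : (n : ℤ) < (dd : ℤ) := by exact_mod_cast hnlt
      omega
    have hρ1 : (1 : ℤ) ≤ ρ := by exact_mod_cast hρ
    have hlt : (dd : ℤ) * ((c' : ℤ) - 1) < dd * q := by nlinarith
    have := lt_of_mul_lt_mul_left hlt (by positivity : (0:ℤ) ≤ (dd:ℤ))
    omega
  set q' : ℕ := q.toNat with hq'n
  have hqq : (q' : ℤ) = q := Int.toNat_of_nonneg (le_trans (by positivity) hqge)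
  have hzeq : z = dd * q' + n * ρ := by
    have : (z : ℤ) = dd * q' + n * ρ := by rw [hqq]; omega
    exact_mod_cast this
  rw [hzeq]
  refine add_mem (AddSubmonoid.mem_sup_left ?_) (AddSubmonoid.mem_sup_right ?_)
  · exact ⟨q', hc' q' (by exact_mod_cast hqq ▸ hqge), rfl⟩
  · exact AddSubmonoid.mem_closure_singleton.mpr ⟨n, by simp [nsmul_eq_mul]⟩

lemma conductor_sup (S' : AddSubmonoid ℕ) (dd ρ : ℕ) (hd : 0 < dd) (hρ : 0 < ρ)
    (hcop : Nat.gcd dd ρ = 1) (hρS : ρ ∈ S')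
    (hmem : ∀ z, conductorOf S' ≤ z → z ∈ S') :
    conductorOf (S'.map (AddMonoidHom.mulLeft dd) ⊔ AddSubmonoid.closure {ρ})
      = dd * conductorOf S' + (ρ - 1) * (dd - 1) := by
  set C' := conductorOf S' with hC'
  set T := dd * C' + (ρ - 1) * (dd - 1) with hT
  have hnot : 1 ≤ C' → (C' - 1) ∉ S' := by
    intro h1 hmem'
    have : C' - 1 ∈ {c : ℕ | ∀ z : ℕ, c ≤ z → z ∈ S'} := by
      intro z hz
      rcases eq_or_lt_of_le hz with h | h
      · rwa [← h]
      · exact hmem z (by omega)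
    have h2 : C' ≤ C' - 1 := by
      rw [hC', conductorOf]; exact Nat.sInf_le this
    omega
  have hTmem : T ∈ {c : ℕ | ∀ z : ℕ, c ≤ z →
      z ∈ S'.map (AddMonoidHom.mulLeft dd) ⊔ AddSubmonoid.closure {ρ}} :=
    fun z hz => upper_mem S' dd ρ C' hd hρ hcop hmem z hz
  apply le_antisymm (Nat.sInf_le hTmem)
  apply le_csInf ⟨T, hTmem⟩
  intro c hc
  by_contra hlt
  push_neg at hlt
  have hT1 : 1 ≤ T := by omega
  have hz0 : T - 1 ∈ S'.map (AddMonoidHom.mulLeft dd) ⊔ AddSubmonoid.closure {ρ} :=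
    hc (T - 1) (by omega)
  rw [AddSubmonoid.mem_sup] at hz0
  obtain ⟨a, ha, b, hb, hab⟩ := hz0
  obtain ⟨s, hs, rfl⟩ := ha
  obtain ⟨n, rfl⟩ := AddSubmonoid.mem_closure_singleton.mp hb
  simp only [AddMonoidHom.mulLeft, AddMonoidHom.coe_mk, ZeroHom.coe_mk, smul_eq_mul] at hab
  have hTZ : (T : ℤ) = dd * C' + ((ρ:ℤ) - 1) * ((dd:ℤ) - 1) := by
    have h1 : ((ρ - 1) * (dd - 1) : ℕ) = ((ρ : ℤ) - 1) * ((dd : ℤ) - 1) := by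
      push_cast [Nat.cast_sub hρ, Nat.cast_sub hd]; ring
    rw [hT]; push_cast [h1]; ring
  have h2 : (dd : ℤ) * s + n * ρ = (T : ℤ) - 1 := by
    have h3 := congrArg (fun x : ℕ => (x : ℤ)) hab
    push_cast [Nat.cast_sub hT1] at h3
    linarith
  have key : (dd : ℤ) * s + (n + 1) * ρ = dd * (C' + ρ - 1) := by
    linear_combination h2 + hTZ
  have hdvd : dd ∣ (n + 1) := by
    have hdvd1 : (dd : ℤ) ∣ ((n + 1) * ρ : ℕ) := ⟨(C' + ρ - 1) - s, by push_cast; linarith⟩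
    have hdvd2 : dd ∣ (n + 1) * ρ := by exact_mod_cast hdvd1
    exact (Nat.Coprime.dvd_of_dvd_mul_right hcop hdvd2)
  obtain ⟨m, hm⟩ := hdvd
  have hm1 : 1 ≤ m := by
    rcases Nat.eq_zero_or_pos m with h0 | h0
    · exfalso
      have : n + 1 = 0 := by rw [hm, h0, mul_zero]
      omega
    · exact h0
  have hsm : (s : ℤ) + ((m:ℤ) - 1) * ρ = (C':ℤ) - 1 := by
    have hc1 : (dd : ℤ) * ((s:ℤ) + (m:ℤ) * ρ) = dd * ((C':ℤ) + ρ - 1) := by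
      have hm' : ((n:ℤ) + 1) = (dd:ℤ) * m := by exact_mod_cast hm
      linear_combination key - ρ * hm'
    have hc2 := mul_left_cancel₀ (Int.natCast_ne_zero.mpr hd.ne') hc1
    linear_combination hc2
  have hC1 : 1 ≤ C' := by
    by_contra hC0
    have : C' = 0 := by omega
    have hC0' : (C' : ℤ) = 0 := by exact_mod_cast (by omega : C' = 0)
    rw [hC0'] at hsm
    have hm1' : (1 : ℤ) ≤ m := by exact_mod_cast hm1
    have hρ' : (1 : ℤ) ≤ ρ := by exact_mod_cast hρ
    nlinarith
  have : C' - 1 ∈ S' := by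
    have heq : C' - 1 = s + (m - 1) * ρ := by
      have h4 : ((C' - 1 : ℕ) : ℤ) = (s : ℤ) + ((m - 1 : ℕ) : ℤ) * ρ := by
        push_cast [Nat.cast_sub hm1, Nat.cast_sub hC1]; linarith
      exact_mod_cast h4
    rw [heq]
    have hρm : (m - 1) * ρ ∈ S' := by
      simpa [nsmul_eq_mul] using nsmul_mem hρS (m - 1)
    exact add_mem hs hρm
  exact hnot hC1 this

variable {h : ℕ} {r d : ℕ → ℕ}

lemma d_pos (hfree : IsFreeSeq h r d) : ∀ k, 1 ≤ k → k ≤ h + 1 → 0 < d k := by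
  obtain ⟨hpos, hd1, hgcd, hdh1, hclo⟩ := id hfree
  intro k hk1 hkh
  induction k with
  | zero => omega
  | succ k ih =>
    rcases Nat.eq_zero_or_pos k with h0 | h0
    · subst h0; rw [hd1]; exact hpos 0 (by omega)
    · rw [hgcd k h0 (by omega)]
      exact Nat.gcd_pos_of_pos_right _ (hpos k (by omega))

lemma dh_dvd_d (hfree : IsFreeSeq h r d) : ∀ k, 1 ≤ k → k ≤ h → d h ∣ d k := by
  obtain ⟨hpos, hd1, hgcd, hdh1, hclo⟩ := id hfree
  have key : ∀ m, m ≤ h - 1 → d h ∣ d (h - m) := by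
    intro m
    induction m with
    | zero => intro _; simp only [Nat.sub_zero]; exact dvd_refl (d h)
    | succ m ih =>
      intro hm
      have h1 : d h ∣ d (h - m) := ih (by omega)
      have h2 : h - (m + 1) + 1 = h - m := by omega
      have h3 : d (h - m) ∣ d (h - (m + 1)) := by
        rw [← h2, hgcd (h - (m+1)) (by omega) (by omega)]
        exact Nat.gcd_dvd_left _ _
      exact dvd_trans h1 h3
  intro k hk1 hkh
  have := key (h - k) (by omega)
  rwa [show h - (h - k) = k by omega] at this

lemma dh_dvd_r (hfree : IsFreeSeq h r d) : ∀ k, k < h → d h ∣ r k := by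
  intro k hk
  obtain ⟨hpos, hd1, hgcd, hdh1, hclo⟩ := id hfree
  rcases Nat.eq_zero_or_pos k with h0 | h0
  · subst h0; rw [← hd1]; exact dh_dvd_d hfree 1 le_rfl (by omega)
  · have h1 : d h ∣ d (k + 1) := dh_dvd_d hfree (k+1) (by omega) (by omega)
    rw [hgcd k h0 (by omega)] at h1
    exact dvd_trans h1 (Nat.gcd_dvd_right _ _)

lemma free_scaled (hfree : IsFreeSeq h r d) (hh : 1 ≤ h) :
    IsFreeSeq (h - 1) (fun k => r k / d h) (fun k => d k / d h) := by
  have hdh : 0 < d h := d_pos hfree h hh (by omega)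
  obtain ⟨hpos, hd1, hgcd, hdh1, hclo⟩ := id hfree
  refine ⟨?_, ?_, ?_, ?_, ?_⟩
  · intro k hk
    exact Nat.div_pos (Nat.le_of_dvd (hpos k (by omega)) (dh_dvd_r hfree k (by omega))) hdh
  · simp [hd1]
  · intro k hk1 hkh
    have e1 : d h ∣ d k := dh_dvd_d hfree k hk1 (by omega)
    have e2 : d h ∣ r k := dh_dvd_r hfree k (by omega)
    simp only
    rw [Nat.gcd_div e1 e2, hgcd k hk1 (by omega)]
  · simp only [show h - 1 + 1 = h by omega, Nat.div_self hdh]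
  · intro k hk1 hkh
    have ekeq : (d k / d h) / (d (k+1) / d h) = d k / d (k+1) := by
      have e1 : d h ∣ d (k+1) := dh_dvd_d hfree (k+1) (by omega) (by omega)
      have e2 : d (k+1) ∣ d k := by
        rw [hgcd k hk1 (by omega)]; exact Nat.gcd_dvd_left _ _
      rcases e1 with ⟨a, ha⟩
      rcases e2 with ⟨b, hb⟩
      have ha' : 0 < a := by
        rcases Nat.eq_zero_or_pos a with h0 | h0
        · exfalso
          have hd2 := d_pos hfree (k+1) (by omega) (by omega)
          rw [ha, h0, mul_zero] at hd2
          exact lt_irrefl 0 hd2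
        · exact h0
      rw [hb, ha, Nat.mul_div_cancel_left b (Nat.mul_pos hdh ha'),
        Nat.mul_div_cancel_left a hdh, mul_assoc, Nat.mul_div_cancel_left (a*b) hdh,
        Nat.mul_div_cancel_left b ha']
    have hrk : d h ∣ r k := dh_dvd_r hfree k (by omega)
    show (d k / d h) / (d (k+1) / d h) * (r k / d h) ∈
      AddSubmonoid.closure ((fun k => r k / d h) '' Set.Iio k)
    rw [ekeq, ← Nat.mul_div_assoc _ hrk]
    have hmem := hclo k hk1 (by omega)
    rw [closure_image_div (d h) r (Set.Iio k)
      (fun j hj => dh_dvd_r hfree j (lt_of_lt_of_le (Set.mem_Iio.mp hj) (by omega)))] at hmem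
    rw [mem_map_mulLeft] at hmem
    obtain ⟨s, hs, hds⟩ := hmem
    rw [← hds, Nat.mul_div_cancel_left s hdh]
    exact hs

lemma decomp (hfree : IsFreeSeq h r d) (hh : 1 ≤ h) :
    AddSubmonoid.closure (r '' Set.Iic h)
      = (AddSubmonoid.closure ((fun k => r k / d h) '' Set.Iic (h - 1))).map
          (AddMonoidHom.mulLeft (d h)) ⊔ AddSubmonoid.closure {r h} := by
  have h1 : Set.Iic h = Set.Iio h ∪ {h} := by
    ext x; simp only [Set.mem_Iic, Set.mem_Iio, Set.mem_union, Set.mem_singleton_iff]; omega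
  have h2 : Set.Iic (h - 1) = Set.Iio h := by
    ext x; simp only [Set.mem_Iic, Set.mem_Iio, Set.mem_union, Set.mem_singleton_iff]; omega
  rw [h1, Set.image_union, Set.image_singleton, AddSubmonoid.closure_union, h2,
    closure_image_div (d h) r (Set.Iio h) (fun j hj => dh_dvd_r hfree j (Set.mem_Iio.mp hj))]

lemma rh_mem_scaled (hfree : IsFreeSeq h r d) (hh : 1 ≤ h) :
    r h ∈ AddSubmonoid.closure ((fun k => r k / d h) '' Set.Iic (h - 1)) := by
  have hdh : 0 < d h := d_pos hfree h hh (by omega)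
  obtain ⟨hpos, hd1, hgcd, hdh1, hclo⟩ := id hfree
  have hmem := hclo h hh le_rfl
  rw [hdh1, Nat.div_one] at hmem
  have h2 : Set.Iic (h - 1) = Set.Iio h := by
    ext x; simp only [Set.mem_Iic, Set.mem_Iio, Set.mem_union, Set.mem_singleton_iff]; omega
  rw [closure_image_div (d h) r (Set.Iio h)
    (fun j hj => dh_dvd_r hfree j (Set.mem_Iio.mp hj)), mem_map_mulLeft] at hmem
  obtain ⟨s, hs, hds⟩ := hmem
  have : s = r h := Nat.eq_of_mul_eq_mul_left hdh hds
  rw [h2, ← this]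
  exact hs

lemma free_cofinite : ∀ (h : ℕ) (r d : ℕ → ℕ), IsFreeSeq h r d →
    ∃ c, ∀ z, c ≤ z → z ∈ AddSubmonoid.closure (r '' Set.Iic h) := by
  intro h
  induction h with
  | zero =>
    intro r d hfree
    obtain ⟨hpos, hd1, _, hdh1, _⟩ := hfree
    have hr0 : r 0 = 1 := by rw [← hd1]; exact hdh1
    refine ⟨0, fun z _ => ?_⟩
    have h1 : r 0 ∈ AddSubmonoid.closure (r '' Set.Iic 0) :=
      AddSubmonoid.subset_closure ⟨0, by simp, rfl⟩
    have := nsmul_mem h1 z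
    rwa [hr0, smul_eq_mul, mul_one] at this
  | succ n ih =>
    intro r d hfree
    have hh : 1 ≤ n + 1 := by omega
    have hscaled := free_scaled hfree hh
    rw [show n + 1 - 1 = n by omega] at hscaled
    obtain ⟨c', hc'⟩ := ih _ _ hscaled
    have hdh : 0 < d (n+1) := d_pos hfree (n+1) hh (by omega)
    obtain ⟨hpos, hd1, hgcd, hdh1, hclo⟩ := id hfree
    have hcop : Nat.gcd (d (n+1)) (r (n+1)) = 1 := by
      rw [← hgcd (n+1) hh le_rfl]; exact hdh1
    refine ⟨d (n+1) * c' + (r (n+1) - 1) * (d (n+1) - 1), fun z hz => ?_⟩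
    rw [decomp hfree hh, show n + 1 - 1 = n by omega]
    exact upper_mem _ (d (n+1)) (r (n+1)) c' hdh (hpos (n+1) le_rfl) hcop hc' z hz

end Aux

/-- If `(r_0, …, r_h)` is a free sequence with `h ≥ 1`, then
`(r_0/d_h, …, r_{h−1}/d_h)` (with gcd chain `d_k/d_h`) is again a free sequence, and the
conductors satisfy
`C(⟨r_0, …, r_h⟩) = d_h · C(⟨r_0/d_h, …, r_{h−1}/d_h⟩) + (r_h − 1)(d_h − 1)`. -/
theorem conductor_recursion_of_free_sequence (h : ℕ) (hh : 1 ≤ h) (r d : ℕ → ℕ)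
    (hfree : IsFreeSeq h r d) :
    IsFreeSeq (h - 1) (fun k => r k / d h) (fun k => d k / d h) ∧
    conductorOf (AddSubmonoid.closure (r '' Set.Iic h))
      = d h * conductorOf
          (AddSubmonoid.closure ((fun k => r k / d h) '' Set.Iic (h - 1)))
        + (r h - 1) * (d h - 1) := by
  refine ⟨free_scaled hfree hh, ?_⟩
  have hdh : 0 < d h := d_pos hfree h hh (by omega)
  obtain ⟨hpos, hd1, hgcd, hdh1, hclo⟩ := id hfree
  have hcop : Nat.gcd (d h) (r h) = 1 := by
    rw [← hgcd h hh le_rfl]; exact hdh1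
  set S' := AddSubmonoid.closure ((fun k => r k / d h) '' Set.Iic (h - 1)) with hS'
  have hmem : ∀ z, conductorOf S' ≤ z → z ∈ S' := by
    have hne : {c : ℕ | ∀ z : ℕ, c ≤ z → z ∈ S'}.Nonempty := by
      obtain ⟨c, hc⟩ := free_cofinite (h - 1) _ _ (free_scaled hfree hh)
      exact ⟨c, hc⟩
    have := Nat.sInf_mem hne
    exact this
  rw [decomp hfree hh]
  exact conductor_sup S' (d h) (r h) hdh (hpos h le_rfl) hcop (rh_mem_scaled hfree hh) hmem
end

section
/- Let (r_0, …, r_h) be a free sequence of positive integers such that d_{k+1} < d_k for all 1 ≤ k ≤ h (i.e., e_k > 1 for all k). Then Σ_{k=1}^h (e_k − 1) r_k ≥ r_0 − 1, and equality holds if and only if r_k = d_{k+1} for every 1 ≤ k ≤ h. In particular, the conductor (Σ_{k=1}^h (e_k − 1) r_k) − r_0 + 1 of ⟨r_0,…,r_h⟩ is zero if and only if r_k = d_{k+1} for all 1 ≤ k ≤ h. -/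
private lemma telescope (f : ℕ → ℤ) : ∀ n : ℕ,
    ∑ k ∈ Finset.Icc 1 n, (f k - f (k + 1)) = f 1 - f (n + 1) := by
  intro n
  induction n with
  | zero => simp
  | succ n ih =>
    rw [Finset.sum_Icc_succ_top (by omega), ih]
    ring

/-- For a free sequence with strictly decreasing gcd chain (`e_k > 1` for all `k`) one has
`Σ_{k=1}^h (e_k − 1) r_k ≥ r_0 − 1`, with equality if and only if `r_k = d_{k+1}` for all
`1 ≤ k ≤ h`; in particular the conductor `(Σ_{k=1}^h (e_k − 1) r_k) − r_0 + 1` of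
`⟨r_0, …, r_h⟩` vanishes if and only if `r_k = d_{k+1}` for all `1 ≤ k ≤ h`. -/
theorem conductor_zero_iff (h : ℕ) (r d : ℕ → ℕ)
    (hfree : IsFreeSeq h r d)
    (hdec : ∀ k, 1 ≤ k → k ≤ h → d (k + 1) < d k) :
    (r 0 : ℤ) - 1 ≤
        ∑ k ∈ Finset.Icc 1 h, (((d k / d (k + 1) : ℕ) : ℤ) - 1) * (r k : ℤ) ∧
    ((∑ k ∈ Finset.Icc 1 h, (((d k / d (k + 1) : ℕ) : ℤ) - 1) * (r k : ℤ))
        = (r 0 : ℤ) - 1 ↔ ∀ k, 1 ≤ k → k ≤ h → r k = d (k + 1)) ∧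
    ((∑ k ∈ Finset.Icc 1 h, (((d k / d (k + 1) : ℕ) : ℤ) - 1) * (r k : ℤ))
        - (r 0 : ℤ) + 1 = 0 ↔ ∀ k, 1 ≤ k → k ≤ h → r k = d (k + 1)) := by
  obtain ⟨hpos, hd1, hgcd, hdh, -⟩ := hfree
  -- basic per-index facts
  have hfacts : ∀ k, 1 ≤ k → k ≤ h →
      ((d (k + 1) : ℤ)) ≤ (r k : ℤ) ∧ 2 ≤ ((d k / d (k + 1) : ℕ) : ℤ) ∧
        ((d k / d (k + 1) : ℕ) : ℤ) * (d (k + 1) : ℤ) = (d k : ℤ) := by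
    intro k hk1 hkh
    have hrk : 0 < r k := hpos k hkh
    have hdvd_r : d (k + 1) ∣ r k := by rw [hgcd k hk1 hkh]; exact Nat.gcd_dvd_right _ _
    have hdvd_d : d (k + 1) ∣ d k := by rw [hgcd k hk1 hkh]; exact Nat.gcd_dvd_left _ _
    have hdp : 0 < d (k + 1) := by
      rw [hgcd k hk1 hkh]; exact Nat.gcd_pos_of_pos_right _ hrk
    have hmul : (d k / d (k + 1)) * d (k + 1) = d k := Nat.div_mul_cancel hdvd_d
    have hlt := hdec k hk1 hkh
    have hE2 : 2 ≤ d k / d (k + 1) := by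
      by_contra hc
      push_neg at hc
      interval_cases hE : (d k / d (k + 1)) <;> omega
    refine ⟨?_, ?_, ?_⟩
    · exact_mod_cast Nat.le_of_dvd hrk hdvd_r
    · exact_mod_cast hE2
    · exact_mod_cast hmul
  have htel : ∑ k ∈ Finset.Icc 1 h, ((d k : ℤ) - (d (k + 1) : ℤ)) = (r 0 : ℤ) - 1 := by
    rw [telescope (fun k => (d k : ℤ)) h, hd1, hdh]
    norm_num
  -- the difference of the two sums
  have hdiff : (∑ k ∈ Finset.Icc 1 h, (((d k / d (k + 1) : ℕ) : ℤ) - 1) * (r k : ℤ))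
      - ((r 0 : ℤ) - 1)
      = ∑ k ∈ Finset.Icc 1 h,
          ((((d k / d (k + 1) : ℕ) : ℤ) - 1) * ((r k : ℤ) - (d (k + 1) : ℤ))) := by
    rw [← htel, ← Finset.sum_sub_distrib]
    refine Finset.sum_congr rfl fun k hk => ?_
    rw [Finset.mem_Icc] at hk
    obtain ⟨-, -, hmul⟩ := hfacts k hk.1 hk.2
    nlinarith [hmul]
  have hnn : ∀ k ∈ Finset.Icc 1 h,
      0 ≤ (((d k / d (k + 1) : ℕ) : ℤ) - 1) * ((r k : ℤ) - (d (k + 1) : ℤ)) := by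
    intro k hk
    rw [Finset.mem_Icc] at hk
    obtain ⟨hle, hE2, -⟩ := hfacts k hk.1 hk.2
    nlinarith
  have hge : 0 ≤ (∑ k ∈ Finset.Icc 1 h, (((d k / d (k + 1) : ℕ) : ℤ) - 1) * (r k : ℤ))
      - ((r 0 : ℤ) - 1) := by
    rw [hdiff]
    exact Finset.sum_nonneg hnn
  have heq : (∑ k ∈ Finset.Icc 1 h, (((d k / d (k + 1) : ℕ) : ℤ) - 1) * (r k : ℤ))
      = (r 0 : ℤ) - 1 ↔ ∀ k, 1 ≤ k → k ≤ h → r k = d (k + 1) := by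
    rw [← sub_eq_zero, hdiff, Finset.sum_eq_zero_iff_of_nonneg hnn]
    constructor
    · intro H k hk1 hkh
      have := H k (Finset.mem_Icc.mpr ⟨hk1, hkh⟩)
      obtain ⟨hle, hE2, -⟩ := hfacts k hk1 hkh
      have : (r k : ℤ) = (d (k + 1) : ℤ) := by
        rcases mul_eq_zero.mp this with h1 | h2
        · nlinarith
        · linarith
      exact_mod_cast this
    · intro H k hk
      rw [Finset.mem_Icc] at hk
      rw [H k hk.1 hk.2]
      ring
  exact ⟨by linarith, heq, by rw [← heq]; constructor <;> intro <;> linarith⟩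
end

section
/- Let K be a field, n ≥ 1, and let n = d_1 > d_2 > ⋯ > d_{h+1} = 1 be a chain of positive integers with d_{k+1} ∣ d_k for all k; set e_k = d_k/d_{k+1}. Let g_1, …, g_h, g_{h+1} = f ∈ K[x][y] be monic in y with deg_y g_k = n/d_k for 1 ≤ k ≤ h+1. Then every g ∈ K[x,y] can be written in a unique way as a finite sum g = Σ_θ c_θ(x) · g_1^{θ_1} ⋯ g_h^{θ_h} · f^{θ_{h+1}}, where θ = (θ_1,…,θ_{h+1}) ranges over tuples of nonnegative integers with θ_k < e_k for all 1 ≤ k ≤ h and the c_θ(x) ∈ K[x] are almost all zero. Moreover, f divides g if and only if c_θ = 0 for every tuple θ with θ_{h+1} = 0. -/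
open Polynomial

private lemma aux_repr_exists {R : Type*} [CommRing R] [IsDomain R]
    (b : ℕ → R[X]) (hm : ∀ N, (b N).Monic) (hd : ∀ N, (b N).natDegree = N) :
    ∀ G : R[X], ∃ c : ℕ →₀ R, G = c.sum fun N p => C p * b N := by
  have key : ∀ m : ℕ, ∀ G : R[X], G.natDegree < m →
      ∃ c : ℕ →₀ R, G = c.sum fun N p => C p * b N := by
    intro m
    induction m using Nat.strong_induction_on with
    | _ m IH =>
      intro G hG
      by_cases h0 : G = 0
      · exact ⟨0, by simp [h0]⟩
      · have hlc : G.leadingCoeff ≠ 0 := leadingCoeff_ne_zero.mpr h0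
        have hbne : b G.natDegree ≠ 0 := (hm G.natDegree).ne_zero
        have hdegq : G.degree = (C G.leadingCoeff * b G.natDegree).degree := by
          rw [degree_mul, degree_C hlc, zero_add, degree_eq_natDegree h0,
            degree_eq_natDegree hbne, hd]
        have hlcq : G.leadingCoeff = (C G.leadingCoeff * b G.natDegree).leadingCoeff := by
          rw [leadingCoeff_mul, leadingCoeff_C, (hm G.natDegree).leadingCoeff, mul_one]
        have hsingle : (Finsupp.single G.natDegree G.leadingCoeff).sum
            (fun N p => C p * b N) = C G.leadingCoeff * b G.natDegree := by
          rw [Finsupp.sum_single_index]; simp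
        by_cases h0' : G - C G.leadingCoeff * b G.natDegree = 0
        · exact ⟨Finsupp.single G.natDegree G.leadingCoeff, by
            rw [hsingle, ← sub_eq_zero]; exact h0'⟩
        · have hdlt : (G - C G.leadingCoeff * b G.natDegree).degree < G.degree :=
            degree_sub_lt hdegq h0 hlcq
          have hnlt : (G - C G.leadingCoeff * b G.natDegree).natDegree < G.natDegree :=
            natDegree_lt_natDegree h0' hdlt
          obtain ⟨c', hc'⟩ := IH G.natDegree hG _ hnlt
          refine ⟨c' + Finsupp.single G.natDegree G.leadingCoeff, ?_⟩
          rw [Finsupp.sum_add_index' (by simp) (by intro a b1 b2; rw [map_add, add_mul]),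
            ← hc', hsingle]
          ring
  intro G
  exact key (G.natDegree + 1) G (Nat.lt_succ_self _)

private lemma aux_repr_zero {R : Type*} [CommRing R]
    (b : ℕ → R[X]) (hm : ∀ N, (b N).Monic) (hd : ∀ N, (b N).natDegree = N)
    (c : ℕ →₀ R) (hc : (c.sum fun N p => C p * b N) = 0) : c = 0 := by
  by_contra hne
  have hsupp : c.support.Nonempty := Finsupp.support_nonempty_iff.mpr hne
  set N0 := c.support.max' hsupp with hN0
  have hmem : N0 ∈ c.support := c.support.max'_mem hsupp
  have : (c.sum fun N p => C p * b N).coeff N0 = c N0 := by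
    rw [Finsupp.sum, finset_sum_coeff]
    rw [Finset.sum_eq_single N0]
    · rw [coeff_C_mul]
      have h1 := (hm N0).coeff_natDegree
      rw [hd N0] at h1
      rw [h1, mul_one]
    · intro N hN hNe
      have hlt : N < N0 := lt_of_le_of_ne (Finset.le_max' _ _ hN) hNe
      have : (C (c N) * b N).natDegree < N0 := lt_of_le_of_lt
        (le_trans (natDegree_C_mul_le _ _) (le_of_eq (hd N))) hlt
      exact coeff_eq_zero_of_natDegree_lt this
    · intro hN; exact absurd hmem hN
  rw [hc] at this
  simp at this
  exact (Finsupp.mem_support_iff.mp hmem) this.symm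

private lemma aux_repr_unique {R : Type*} [CommRing R]
    (b : ℕ → R[X]) (hm : ∀ N, (b N).Monic) (hd : ∀ N, (b N).natDegree = N)
    (c c' : ℕ →₀ R) (hcc : (c.sum fun N p => C p * b N) = c'.sum fun N p => C p * b N) :
    c = c' := by
  have := aux_repr_zero b hm hd (c - c') ?_
  · exact sub_eq_zero.mp this
  · rw [Finsupp.sum_sub_index (by intro a b1 b2; rw [map_sub, sub_mul]), hcc, sub_self]

/-- Extension of a `Fin (h+1)`-tuple to `ℕ` by zero. -/
private def liftTup (h : ℕ) (θ : Fin (h + 1) → ℕ) : ℕ → ℕ :=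
  fun i => if hi : i < h + 1 then θ ⟨i, hi⟩ else 0

private lemma liftTup_lt {h : ℕ} (θ : Fin (h + 1) → ℕ) {i : ℕ} (hi : i < h + 1) :
    liftTup h θ i = θ ⟨i, hi⟩ := dif_pos hi

/-- **Expansion with respect to a family of approximate roots.**  Given a chain of
divisors `n = d_1 > d_2 > ⋯ > d_{h+1} = 1` with `d_{k+1} ∣ d_k`, `e_k = d_k/d_{k+1}`, and
polynomials `g_1, …, g_h, g_{h+1} = f ∈ K[x][y]` monic in `y` of `y`-degrees `n/d_k`,
every `G ∈ K[x,y]` is in a unique way a finite sum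
`G = Σ_θ c_θ(x) g_1^{θ_1} ⋯ g_h^{θ_h} f^{θ_{h+1}}` over tuples `θ` with `θ_k < e_k` for
`1 ≤ k ≤ h`; moreover `f ∣ G` iff `c_θ = 0` whenever `θ_{h+1} = 0`.
(Tuples are encoded as `θ : Fin (h+1) → ℕ`, where `θ i` is `θ_{i+1}`.) -/
theorem expansion_wrt_approximate_roots (K : Type*) [Field K]
    (n h : ℕ) (hn : 1 ≤ n) (d : ℕ → ℕ)
    (hd1 : d 1 = n) (hdh1 : d (h + 1) = 1)
    (hdvd : ∀ k, 1 ≤ k → k ≤ h → d (k + 1) ∣ d k)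
    (hlt : ∀ k, 1 ≤ k → k ≤ h → d (k + 1) < d k)
    (e : ℕ → ℕ) (he : ∀ k, 1 ≤ k → k ≤ h → e k = d k / d (k + 1))
    (g : ℕ → Polynomial (Polynomial K)) (f : Polynomial (Polynomial K))
    (hg : ∀ k, 1 ≤ k → k ≤ h + 1 → (g k).Monic ∧ (g k).natDegree = n / d k)
    (hf : g (h + 1) = f) :
    ∀ G : Polynomial (Polynomial K),
      (∃! c : (Fin (h + 1) → ℕ) →₀ Polynomial K,
        (∀ θ ∈ c.support, ∀ i : Fin (h + 1), (i : ℕ) < h → θ i < e ((i : ℕ) + 1)) ∧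
        G = c.sum fun θ p =>
          Polynomial.C p * ∏ i : Fin (h + 1), g ((i : ℕ) + 1) ^ θ i) ∧
      ∀ c : (Fin (h + 1) → ℕ) →₀ Polynomial K,
        ((∀ θ ∈ c.support, ∀ i : Fin (h + 1), (i : ℕ) < h → θ i < e ((i : ℕ) + 1)) ∧
          G = c.sum fun θ p =>
            Polynomial.C p * ∏ i : Fin (h + 1), g ((i : ℕ) + 1) ^ θ i) →
        (f ∣ G ↔ ∀ θ : Fin (h + 1) → ℕ, θ (Fin.last h) = 0 → c θ = 0) := by
  classical
  -- ARITHMETIC PRELIMINARIES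
  have hdpos : ∀ k, 1 ≤ k → k ≤ h + 1 → 0 < d k := by
    intro k hk1 hk2
    rcases Nat.lt_or_ge k (h + 1) with hk | hk
    · have := hlt k hk1 (by omega); omega
    · have : k = h + 1 := by omega
      rw [this, hdh1]; omega
  have hdn : ∀ k, 1 ≤ k → k ≤ h + 1 → d k ∣ n := by
    intro k hk1
    induction k, hk1 using Nat.le_induction with
    | base => intro _; rw [hd1]
    | succ k hk IH =>
      intro hk2
      exact dvd_trans (hdvd k hk (by omega)) (IH (by omega))
  set M : ℕ → ℕ := fun i => n / d (i + 1) with hM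
  have hM0 : M 0 = 1 := by
    simp only [hM, hd1]
    exact Nat.div_self (by omega)
  have hMh : M h = n := by
    simp only [hM, hdh1, Nat.div_one]
  have hMstep : ∀ i, i < h → M (i + 1) = M i * e (i + 1) := by
    intro i hi
    have h1 : 1 ≤ i + 1 := by omega
    have h2 : i + 1 ≤ h := hi
    simp only [hM]
    rw [he (i + 1) h1 h2]
    have hdv1 : d (i + 1) ∣ n := hdn (i + 1) h1 (by omega)
    have hdv2 : d (i + 1 + 1) ∣ d (i + 1) := hdvd (i + 1) h1 h2
    have hp1 : 0 < d (i + 1) := hdpos _ h1 (by omega)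
    rw [Nat.div_mul_div_comm hdv1 hdv2, mul_comm n (d (i + 1))]
    exact (Nat.mul_div_mul_left _ _ hp1).symm
  have hMpos : ∀ i, i ≤ h → 0 < M i := by
    intro i hi
    have hdv : d (i + 1) ∣ n := hdn (i + 1) (by omega) (by omega)
    exact Nat.div_pos (Nat.le_of_dvd (by omega) hdv) (hdpos (i + 1) (by omega) (by omega))
  have hsum_lt : ∀ j, j ≤ h → ∀ θ : ℕ → ℕ, (∀ i, i < j → θ i < e (i + 1)) →
      ∑ i ∈ Finset.range j, θ i * M i < M j := by
    intro j
    induction j with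
    | zero => intro _ θ _; simp [hM0]
    | succ j IH =>
      intro hj θ hθ
      rw [Finset.sum_range_succ, hMstep j (by omega)]
      have h1 : ∑ i ∈ Finset.range j, θ i * M i < M j :=
        IH (by omega) θ (fun i hi => hθ i (by omega))
      have h2 : θ j + 1 ≤ e (j + 1) := hθ j (by omega)
      calc ∑ i ∈ Finset.range j, θ i * M i + θ j * M j
          < M j + θ j * M j := by omega
        _ = (1 + θ j) * M j := by ring
        _ ≤ e (j + 1) * M j := Nat.mul_le_mul_right _ (by omega)
        _ = M j * e (j + 1) := by ring
  have hexistsD : ∀ j, j ≤ h → ∀ r, r < M j → ∃ θ : ℕ → ℕ,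
      (∀ i, i < j → θ i < e (i + 1)) ∧ (∀ i, j ≤ i → θ i = 0) ∧
      ∑ i ∈ Finset.range j, θ i * M i = r := by
    intro j
    induction j with
    | zero =>
      intro _ r hr
      rw [hM0] at hr
      exact ⟨fun _ => 0, by omega, fun _ _ => rfl, by simpa using (by omega : 0 = r)⟩
    | succ j IH =>
      intro hj r hr
      have hMj : 0 < M j := hMpos j (by omega)
      have hq : r / M j < e (j + 1) := by
        rw [Nat.div_lt_iff_lt_mul hMj]
        rw [hMstep j (by omega)] at hr
        calc r < M j * e (j + 1) := hr
          _ = e (j + 1) * M j := by ring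
      obtain ⟨θ', hb', hz', hs'⟩ := IH (by omega) (r % M j) (Nat.mod_lt _ hMj)
      refine ⟨Function.update θ' j (r / M j), ?_, ?_, ?_⟩
      · intro i hi
        rcases Nat.lt_or_ge i j with hij | hij
        · rw [Function.update_of_ne (by omega)]; exact hb' i hij
        · have : i = j := by omega
          subst this
          rw [Function.update_self]; exact hq
      · intro i hi
        rw [Function.update_of_ne (by omega)]; exact hz' i (by omega)
      · rw [Finset.sum_range_succ, Function.update_self]
        have heq : ∑ i ∈ Finset.range j, Function.update θ' j (r / M j) i * M i
            = ∑ i ∈ Finset.range j, θ' i * M i := by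
          apply Finset.sum_congr rfl
          intro i hi
          have : i < j := Finset.mem_range.mp hi
          rw [Function.update_of_ne (by omega)]
        rw [heq, hs', Nat.mod_add_div']
  have huniqD : ∀ j, j ≤ h → ∀ θ θ' : ℕ → ℕ, (∀ i, i < j → θ i < e (i + 1)) →
      (∀ i, i < j → θ' i < e (i + 1)) →
      (∑ i ∈ Finset.range j, θ i * M i = ∑ i ∈ Finset.range j, θ' i * M i) →
      ∀ i, i < j → θ i = θ' i := by
    intro j
    induction j with
    | zero => intro _ _ _ _ _ _ i hi; omega
    | succ j IH =>
      intro hj θ θ' hb hb' hs i hi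
      rw [Finset.sum_range_succ, Finset.sum_range_succ] at hs
      have hA : ∑ i ∈ Finset.range j, θ i * M i < M j :=
        hsum_lt j (by omega) θ (fun i hi => hb i (by omega))
      have hB : ∑ i ∈ Finset.range j, θ' i * M i < M j :=
        hsum_lt j (by omega) θ' (fun i hi => hb' i (by omega))
      have hMj : 0 < M j := hMpos j (by omega)
      have hjj : θ j = θ' j := by
        have e1 : (∑ i ∈ Finset.range j, θ i * M i + θ j * M j) / M j = θ j := by
          rw [Nat.add_mul_div_right _ _ hMj, Nat.div_eq_of_lt hA, zero_add]
        have e2 : (∑ i ∈ Finset.range j, θ' i * M i + θ' j * M j) / M j = θ' j := by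
          rw [Nat.add_mul_div_right _ _ hMj, Nat.div_eq_of_lt hB, zero_add]
        rw [← e1, ← e2, hs]
      rcases Nat.lt_or_ge i j with hij | hij
      · refine IH (by omega) θ θ' (fun i hi => hb i (by omega))
          (fun i hi => hb' i (by omega)) ?_ i hij
        have : θ j * M j = θ' j * M j := by rw [hjj]
        omega
      · have : i = j := by omega
        subst this; exact hjj
  -- uniqueness over the full range h+1 (top digit unbounded)
  have huniqD' : ∀ θ θ' : ℕ → ℕ, (∀ i, i < h → θ i < e (i + 1)) →
      (∀ i, i < h → θ' i < e (i + 1)) →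
      (∑ i ∈ Finset.range (h + 1), θ i * M i = ∑ i ∈ Finset.range (h + 1), θ' i * M i) →
      ∀ i, i < h + 1 → θ i = θ' i := by
    intro θ θ' hb hb' hs i hi
    rw [Finset.sum_range_succ, Finset.sum_range_succ] at hs
    have hA : ∑ i ∈ Finset.range h, θ i * M i < M h := hsum_lt h le_rfl θ hb
    have hB : ∑ i ∈ Finset.range h, θ' i * M i < M h := hsum_lt h le_rfl θ' hb'
    have hMj : 0 < M h := hMpos h le_rfl
    have hjj : θ h = θ' h := by
      have e1 : (∑ i ∈ Finset.range h, θ i * M i + θ h * M h) / M h = θ h := by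
        rw [Nat.add_mul_div_right _ _ hMj, Nat.div_eq_of_lt hA, zero_add]
      have e2 : (∑ i ∈ Finset.range h, θ' i * M i + θ' h * M h) / M h = θ' h := by
        rw [Nat.add_mul_div_right _ _ hMj, Nat.div_eq_of_lt hB, zero_add]
      rw [← e1, ← e2, hs]
    rcases Nat.lt_or_ge i h with hij | hij
    · refine huniqD h le_rfl θ θ' hb hb' ?_ i hij
      have : θ h * M h = θ' h * M h := by rw [hjj]
      omega
    · have : i = h := by omega
      subst this; exact hjj
  -- decoding function
  have hdecEx : ∀ N : ℕ, ∃ θ : ℕ → ℕ, (∀ i, i < h → θ i < e (i + 1)) ∧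
      ∑ i ∈ Finset.range (h + 1), θ i * M i = N := by
    intro N
    have hrem : N % n < M h := by rw [hMh]; exact Nat.mod_lt _ (by omega)
    obtain ⟨θ', hb', hz', hs'⟩ := hexistsD h le_rfl (N % n) hrem
    refine ⟨Function.update θ' h (N / n), ?_, ?_⟩
    · intro i hi
      rw [Function.update_of_ne (by omega)]; exact hb' i hi
    · rw [Finset.sum_range_succ, Function.update_self, hMh]
      have heq : ∑ i ∈ Finset.range h, Function.update θ' h (N / n) i * M i
          = ∑ i ∈ Finset.range h, θ' i * M i := by
        apply Finset.sum_congr rfl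
        intro i hi
        have : i < h := Finset.mem_range.mp hi
        rw [Function.update_of_ne (by omega)]
      rw [heq, hs', Nat.mod_add_div']
  choose dec hdecB hdecS using hdecEx
  -- Fin-level encoding
  set enc : (Fin (h + 1) → ℕ) → ℕ := fun θ => ∑ i ∈ Finset.range (h + 1), liftTup h θ i * M i
    with henc
  set decF : ℕ → Fin (h + 1) → ℕ := fun N i => dec N (i : ℕ) with hdecF
  have hencdec : ∀ N, enc (decF N) = N := by
    intro N
    have h1 : enc (decF N) = ∑ i ∈ Finset.range (h + 1), dec N i * M i := by
      simp only [henc]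
      apply Finset.sum_congr rfl
      intro i hi
      have hi' : i < h + 1 := Finset.mem_range.mp hi
      rw [liftTup_lt _ hi']
    rw [h1, hdecS]
  have hdecFB : ∀ N, ∀ i : Fin (h + 1), (i : ℕ) < h → decF N i < e ((i : ℕ) + 1) := by
    intro N i hi
    exact hdecB N i hi
  have hencInj : ∀ θ θ' : Fin (h + 1) → ℕ,
      (∀ i : Fin (h + 1), (i : ℕ) < h → θ i < e ((i : ℕ) + 1)) →
      (∀ i : Fin (h + 1), (i : ℕ) < h → θ' i < e ((i : ℕ) + 1)) →
      enc θ = enc θ' → θ = θ' := by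
    intro θ θ' hb hb' hee
    have hlb : ∀ i, i < h → liftTup h θ i < e (i + 1) := by
      intro i hi
      rw [liftTup_lt _ (by omega : i < h + 1)]
      exact hb ⟨i, by omega⟩ hi
    have hlb' : ∀ i, i < h → liftTup h θ' i < e (i + 1) := by
      intro i hi
      rw [liftTup_lt _ (by omega : i < h + 1)]
      exact hb' ⟨i, by omega⟩ hi
    have := huniqD' (liftTup h θ) (liftTup h θ') hlb hlb' hee
    funext i
    have hi2 := this (i : ℕ) i.isLt
    rw [liftTup_lt _ i.isLt, liftTup_lt _ i.isLt] at hi2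
    exact hi2
  have hdecenc : ∀ θ : Fin (h + 1) → ℕ,
      (∀ i : Fin (h + 1), (i : ℕ) < h → θ i < e ((i : ℕ) + 1)) → decF (enc θ) = θ :=
    fun θ hb => hencInj _ _ (hdecFB (enc θ)) hb (hencdec (enc θ))
  have hdecInj : Function.Injective decF := fun N N' hNN => by
    rw [← hencdec N, ← hencdec N', hNN]
  -- the ℕ-indexed basis
  set b : ℕ → Polynomial (Polynomial K) :=
    fun N => ∏ i : Fin (h + 1), g ((i : ℕ) + 1) ^ decF N i with hb
  have hgm : ∀ i : Fin (h + 1), (g ((i : ℕ) + 1)).Monic ∧ (g ((i : ℕ) + 1)).natDegree = M (i : ℕ) := by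
    intro i
    obtain ⟨m1, m2⟩ := hg ((i : ℕ) + 1) (by omega) (by have := i.isLt; omega)
    exact ⟨m1, m2⟩
  have hbM : ∀ N, (b N).Monic := fun N =>
    monic_prod_of_monic _ _ (fun i _ => ((hgm i).1).pow _)
  have hbD : ∀ N, (b N).natDegree = N := by
    intro N
    have h1 : (b N).natDegree = ∑ i : Fin (h + 1), decF N i * M (i : ℕ) := by
      simp only [hb]
      rw [natDegree_prod_of_monic _ _ (fun i _ => ((hgm i).1).pow _)]
      apply Finset.sum_congr rfl
      intro i _
      rw [natDegree_pow, (hgm i).2]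
    have h2 : ∑ i : Fin (h + 1), decF N i * M (i : ℕ)
        = ∑ i ∈ Finset.range (h + 1), dec N i * M i := by
      rw [← Fin.sum_univ_eq_sum_range (fun i => dec N i * M i) (h + 1)]
    rw [h1, h2, hdecS]
  intro G
  obtain ⟨c0, hc0⟩ := aux_repr_exists b hbM hbD G
  have hmapsum : ∀ c : (Fin (h + 1) → ℕ) →₀ Polynomial K,
      (∀ θ ∈ c.support, ∀ i : Fin (h + 1), (i : ℕ) < h → θ i < e ((i : ℕ) + 1)) →
      (Finsupp.mapDomain enc c).sum (fun N p => C p * b N)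
        = c.sum fun θ p => C p * ∏ i : Fin (h + 1), g ((i : ℕ) + 1) ^ θ i := by
    intro c hbound
    rw [Finsupp.sum_mapDomain_index (by simp) (fun N p q => by rw [map_add, add_mul])]
    apply Finsupp.sum_congr
    intro θ hθ
    have hde : decF (enc θ) = θ := hdecenc θ (hbound θ hθ)
    simp only [hb, hde]
  have hSdef : ∀ c : (Fin (h + 1) → ℕ) →₀ Polynomial K,
      (∀ θ ∈ c.support, ∀ i : Fin (h + 1), (i : ℕ) < h → θ i < e ((i : ℕ) + 1)) →
      ↑c.support ⊆ {θ : Fin (h + 1) → ℕ |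
        ∀ i : Fin (h + 1), (i : ℕ) < h → θ i < e ((i : ℕ) + 1)} :=
    fun c hbound θ hθ => hbound θ hθ
  have hinjOn : Set.InjOn enc {θ : Fin (h + 1) → ℕ |
      ∀ i : Fin (h + 1), (i : ℕ) < h → θ i < e ((i : ℕ) + 1)} :=
    fun θ hθ θ' hθ' hee => hencInj θ θ' hθ hθ' hee
  have hUniq : ∀ c1 c2 : (Fin (h + 1) → ℕ) →₀ Polynomial K,
      ((∀ θ ∈ c1.support, ∀ i : Fin (h + 1), (i : ℕ) < h → θ i < e ((i : ℕ) + 1)) ∧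
        G = c1.sum fun θ p => C p * ∏ i : Fin (h + 1), g ((i : ℕ) + 1) ^ θ i) →
      ((∀ θ ∈ c2.support, ∀ i : Fin (h + 1), (i : ℕ) < h → θ i < e ((i : ℕ) + 1)) ∧
        G = c2.sum fun θ p => C p * ∏ i : Fin (h + 1), g ((i : ℕ) + 1) ^ θ i) →
      c1 = c2 := by
    rintro c1 c2 ⟨hb1, hr1⟩ ⟨hb2, hr2⟩
    have h1 : Finsupp.mapDomain enc c1 = Finsupp.mapDomain enc c2 :=
      aux_repr_unique b hbM hbD _ _
        (by rw [hmapsum c1 hb1, hmapsum c2 hb2, ← hr1, ← hr2])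
    exact Finsupp.mapDomain_injOn _ hinjOn (hSdef c1 hb1) (hSdef c2 hb2) h1
  set cc : (Fin (h + 1) → ℕ) →₀ Polynomial K := Finsupp.mapDomain decF c0 with hcc
  have hccB : ∀ θ ∈ cc.support, ∀ i : Fin (h + 1), (i : ℕ) < h → θ i < e ((i : ℕ) + 1) := by
    intro θ hθ i hi
    have hmem := Finsupp.mapDomain_support hθ
    obtain ⟨N, _, rfl⟩ := Finset.mem_image.mp hmem
    exact hdecFB N i hi
  have hccR : G = cc.sum fun θ p => C p * ∏ i : Fin (h + 1), g ((i : ℕ) + 1) ^ θ i := by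
    rw [hcc, Finsupp.sum_mapDomain_index_inj hdecInj]
    simp only [hb] at hc0
    exact hc0
  -- divisibility helpers
  have hfM : f.Monic := by rw [← hf]; exact (hg (h + 1) (by omega) le_rfl).1
  have hfD : f.natDegree = n := by
    rw [← hf]
    have := (hg (h + 1) (by omega) le_rfl).2
    rwa [hdh1, Nat.div_one] at this
  have hdvdTerm : ∀ θ : Fin (h + 1) → ℕ, θ (Fin.last h) ≠ 0 →
      f ∣ ∏ i : Fin (h + 1), g ((i : ℕ) + 1) ^ θ i := by
    intro θ hθ
    have h1 : g ((Fin.last h : ℕ) + 1) = f := by rw [Fin.val_last]; exact hf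
    have h2 : f ∣ g ((Fin.last h : ℕ) + 1) ^ θ (Fin.last h) := by
      rw [h1]; exact dvd_pow_self f hθ
    exact h2.trans (Finset.dvd_prod_of_mem _ (Finset.mem_univ (Fin.last h)))
  have hdegθ : ∀ θ : Fin (h + 1) → ℕ,
      (∀ i : Fin (h + 1), (i : ℕ) < h → θ i < e ((i : ℕ) + 1)) → θ (Fin.last h) = 0 →
      (∏ i : Fin (h + 1), g ((i : ℕ) + 1) ^ θ i).natDegree < n := by
    intro θ hbound hlast
    have h1 : (∏ i : Fin (h + 1), g ((i : ℕ) + 1) ^ θ i).natDegree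
        = ∑ i ∈ Finset.range (h + 1), liftTup h θ i * M i := by
      rw [natDegree_prod_of_monic _ _ (fun i _ => ((hgm i).1).pow _)]
      rw [← Fin.sum_univ_eq_sum_range (fun i => liftTup h θ i * M i) (h + 1)]
      apply Finset.sum_congr rfl
      intro i _
      rw [natDegree_pow, (hgm i).2, liftTup_lt _ i.isLt]
    rw [h1, Finset.sum_range_succ]
    have h2 : liftTup h θ h = 0 := by
      rw [liftTup_lt _ (by omega : h < h + 1)]
      exact hlast
    rw [h2, zero_mul, add_zero]
    have h3 : ∑ i ∈ Finset.range h, liftTup h θ i * M i < M h := by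
      apply hsum_lt h le_rfl
      intro i hi
      rw [liftTup_lt _ (by omega : i < h + 1)]
      exact hbound ⟨i, by omega⟩ hi
    rwa [hMh] at h3
  refine ⟨⟨cc, ⟨hccB, hccR⟩, fun c' hc' => hUniq c' cc hc' ⟨hccB, hccR⟩⟩, ?_⟩
  rintro c ⟨hbc, hrc⟩
  constructor
  · intro hdvdG θ0 hθ0
    set p : (Fin (h + 1) → ℕ) → Prop := fun θ => θ (Fin.last h) = 0 with hp
    have hGsplit : G = (Finsupp.filter p c).sum
          (fun θ q => C q * ∏ i : Fin (h + 1), g ((i : ℕ) + 1) ^ θ i)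
        + (Finsupp.filter (fun θ => ¬ p θ) c).sum
          (fun θ q => C q * ∏ i : Fin (h + 1), g ((i : ℕ) + 1) ^ θ i) := by
      rw [← Finsupp.sum_add_index' (by simp) (fun a b1 b2 => by rw [map_add, add_mul]),
        Finsupp.filter_pos_add_filter_neg]
      exact hrc
    have hdvd1 : f ∣ (Finsupp.filter (fun θ => ¬ p θ) c).sum
        (fun θ q => C q * ∏ i : Fin (h + 1), g ((i : ℕ) + 1) ^ θ i) := by
      apply Finset.dvd_sum
      intro θ hθ
      rw [Finsupp.support_filter, Finset.mem_filter] at hθ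
      exact (hdvdTerm θ hθ.2).mul_left _
    have hdvd0 : f ∣ (Finsupp.filter p c).sum
        (fun θ q => C q * ∏ i : Fin (h + 1), g ((i : ℕ) + 1) ^ θ i) := by
      have heq : (Finsupp.filter p c).sum
          (fun θ q => C q * ∏ i : Fin (h + 1), g ((i : ℕ) + 1) ^ θ i)
          = G - (Finsupp.filter (fun θ => ¬ p θ) c).sum
            (fun θ q => C q * ∏ i : Fin (h + 1), g ((i : ℕ) + 1) ^ θ i) := by
        rw [hGsplit]; ring
      rw [heq]
      exact dvd_sub hdvdG hdvd1
    have hbfilt : ∀ θ ∈ (Finsupp.filter p c).support, ∀ i : Fin (h + 1),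
        (i : ℕ) < h → θ i < e ((i : ℕ) + 1) := by
      intro θ hθ i hi
      rw [Finsupp.support_filter, Finset.mem_filter] at hθ
      exact hbc θ hθ.1 i hi
    have hP0 : (Finsupp.filter p c).sum
        (fun θ q => C q * ∏ i : Fin (h + 1), g ((i : ℕ) + 1) ^ θ i) = 0 := by
      by_contra hne
      have hle : ((Finsupp.filter p c).sum
          (fun θ q => C q * ∏ i : Fin (h + 1), g ((i : ℕ) + 1) ^ θ i)).natDegree ≤ n - 1 := by
        simp only [Finsupp.sum]
        apply Polynomial.natDegree_sum_le_of_forall_le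
        intro θ hθ
        rw [Finsupp.support_filter, Finset.mem_filter] at hθ
        have hlt' : (∏ i : Fin (h + 1), g ((i : ℕ) + 1) ^ θ i).natDegree < n :=
          hdegθ θ (hbc θ hθ.1) hθ.2
        have := natDegree_C_mul_le ((Finsupp.filter p c) θ)
          (∏ i : Fin (h + 1), g ((i : ℕ) + 1) ^ θ i)
        omega
      have hge := natDegree_le_of_dvd hdvd0 hne
      rw [hfD] at hge
      exact absurd (le_trans hge hle) (Nat.not_le.mpr (Nat.sub_lt hn Nat.one_pos))
    have hflt : Finsupp.filter p c = 0 := by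
      have hmz : Finsupp.mapDomain enc (Finsupp.filter p c) = 0 := by
        apply aux_repr_zero b hbM hbD
        rw [hmapsum _ hbfilt]
        exact hP0
      refine Finsupp.mapDomain_injOn _ hinjOn (hSdef _ hbfilt) (by simp) ?_
      rw [hmz, Finsupp.mapDomain_zero]
    have happ := Finsupp.filter_apply_pos p c (a := θ0) hθ0
    rw [hflt] at happ
    simpa using happ.symm
  · intro hvan
    rw [hrc]
    apply Finset.dvd_sum
    intro θ hθ
    have hne : θ (Fin.last h) ≠ 0 := fun hz => Finsupp.mem_support_iff.mp hθ (hvan θ hz)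
    exact (hdvdTerm θ hne).mul_left _
end

section
/- Let K be a field of characteristic zero, h ≥ 1, and e_1, …, e_h integers with e_k ≥ 2. Set g_0 = x and g_1 = y in K[x,y], and suppose g_2, …, g_{h+1} ∈ K[x,y] satisfy, for each 1 ≤ k ≤ h, g_{k+1} = g_k^{e_k} + a^k_2 g_k^{e_k−2} + ⋯ + a^k_{e_k−1} g_k + a^k_{e_k} g_{k−1} + a_k for some constants a^k_2, …, a^k_{e_k}, a_k ∈ K with a^k_{e_k} ≠ 0. Then K[g_h, g_{h+1}] = K[g_{h−1}, g_h] = ⋯ = K[g_1, g_2] = K[x,y]; in particular the K-subalgebra of K[x,y] generated by g_h and g_{h+1} is all of K[x,y]. -/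
/-- If `g_0 = x`, `g_1 = y` and each `g_{k+1}` is obtained from `g_k, g_{k-1}` by
`g_{k+1} = g_k^{e_k} + a^k_2 g_k^{e_k−2} + ⋯ + a^k_{e_k−1} g_k + a^k_{e_k} g_{k−1} + a_k`
with constants `a^k_i, a_k ∈ K` and `a^k_{e_k} ≠ 0`, then
`K[g_h, g_{h+1}] = K[g_{h−1}, g_h] = ⋯ = K[g_1, g_2] = K[x,y]`. -/
theorem adjoin_chain_eq_top (K : Type*) [Field K] [CharZero K]
    (h : ℕ) (hh : 1 ≤ h) (e : ℕ → ℕ) (he : ∀ k, 1 ≤ k → k ≤ h → 2 ≤ e k)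
    (g : ℕ → MvPolynomial (Fin 2) K)
    (hg0 : g 0 = MvPolynomial.X 0) (hg1 : g 1 = MvPolynomial.X 1)
    (hrec : ∀ k, 1 ≤ k → k ≤ h → ∃ (a : ℕ → K) (a0 : K), a (e k) ≠ 0 ∧
      g (k + 1) = g k ^ (e k)
        + (∑ i ∈ Finset.Icc 2 (e k - 1), MvPolynomial.C (a i) * g k ^ (e k - i))
        + MvPolynomial.C (a (e k)) * g (k - 1)
        + MvPolynomial.C a0) :
    ∀ k, 1 ≤ k → k ≤ h →
      Algebra.adjoin K ({g k, g (k + 1)} : Set (MvPolynomial (Fin 2) K)) = ⊤ := by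
  have hCmem : ∀ (A : Subalgebra K (MvPolynomial (Fin 2) K)) (c : K),
      MvPolynomial.C c ∈ A := by
    intro A c
    rw [← MvPolynomial.algebraMap_eq]
    exact A.algebraMap_mem c
  have step : ∀ k, 1 ≤ k → k ≤ h →
      Algebra.adjoin K ({g k, g (k + 1)} : Set (MvPolynomial (Fin 2) K)) =
      Algebra.adjoin K ({g (k - 1), g k} : Set (MvPolynomial (Fin 2) K)) := by
    intro k hk1 hkh
    obtain ⟨a, a0, ha, hr⟩ := hrec k hk1 hkh
    apply le_antisymm
    · apply Algebra.adjoin_le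
      have hgk : g k ∈ Algebra.adjoin K ({g (k - 1), g k} : Set (MvPolynomial (Fin 2) K)) :=
        Algebra.subset_adjoin (by simp)
      have hgkm : g (k - 1) ∈ Algebra.adjoin K ({g (k - 1), g k} : Set (MvPolynomial (Fin 2) K)) :=
        Algebra.subset_adjoin (by simp)
      rintro p (rfl | rfl)
      · exact hgk
      · set A := Algebra.adjoin K ({g (k - 1), g k} : Set (MvPolynomial (Fin 2) K))
        rw [hr]
        refine A.add_mem (A.add_mem (A.add_mem (A.pow_mem hgk _) ?_)
          (A.mul_mem (hCmem A _) hgkm)) (hCmem A _)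
        exact A.sum_mem fun i _ => A.mul_mem (hCmem A _) (A.pow_mem hgk _)
    · apply Algebra.adjoin_le
      have hgk : g k ∈ Algebra.adjoin K ({g k, g (k + 1)} : Set (MvPolynomial (Fin 2) K)) :=
        Algebra.subset_adjoin (by simp)
      have hgk1 : g (k + 1) ∈ Algebra.adjoin K ({g k, g (k + 1)} : Set (MvPolynomial (Fin 2) K)) :=
        Algebra.subset_adjoin (by simp)
      rintro p (rfl | rfl)
      · -- g (k - 1)
        set A := Algebra.adjoin K ({g k, g (k + 1)} : Set (MvPolynomial (Fin 2) K))
        have h1 : MvPolynomial.C (a (e k))⁻¹ * MvPolynomial.C (a (e k)) =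
            (1 : MvPolynomial (Fin 2) K) := by
          rw [← map_mul, inv_mul_cancel₀ ha, map_one]
        have key : g (k - 1) = MvPolynomial.C (a (e k))⁻¹ *
            (g (k + 1) - g k ^ (e k)
              - (∑ i ∈ Finset.Icc 2 (e k - 1), MvPolynomial.C (a i) * g k ^ (e k - i))
              - MvPolynomial.C a0) := by
          rw [hr]
          linear_combination (-(g (k - 1))) * h1
        rw [key]
        refine A.mul_mem (hCmem A _) (A.sub_mem (A.sub_mem (A.sub_mem hgk1
          (A.pow_mem hgk _)) ?_) (hCmem A _))
        exact A.sum_mem fun i _ => A.mul_mem (hCmem A _) (A.pow_mem hgk _)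
      · exact hgk
  have base : Algebra.adjoin K ({g 0, g 1} : Set (MvPolynomial (Fin 2) K)) = ⊤ := by
    rw [hg0, hg1, eq_top_iff, ← MvPolynomial.adjoin_range_X]
    apply Algebra.adjoin_le
    rintro _ ⟨i, rfl⟩
    fin_cases i
    · exact Algebra.subset_adjoin (by simp)
    · exact Algebra.subset_adjoin (by simp)
  intro k
  induction k with
  | zero => intro h1; omega
  | succ n ih =>
    intro _ hkh
    rcases Nat.eq_zero_or_pos n with rfl | hn
    · rw [step 1 le_rfl hkh]
      simpa using base
    · rw [step (n + 1) (by omega) hkh]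
      simpa using ih hn (by omega)
end

section
/- Let K be a field of characteristic zero, h ≥ 1, and e_1, …, e_h integers with e_k ≥ 2. Set g_0 = x and g_1 = y in K[x,y], and suppose g_2, …, g_{h+1} ∈ K[x,y] satisfy, for each 1 ≤ k ≤ h, g_{k+1} = g_k^{e_k} + a^k_2 g_k^{e_k−2} + ⋯ + a^k_{e_k−1} g_k + a^k_{e_k} g_{k−1} + a_k for some constants a^k_2, …, a^k_{e_k}, a_k ∈ K with a^k_{e_k} ≠ 0. Then there exists a K-algebra automorphism σ of K[x,y] such that σ(g_{h+1}) = y and σ(g_h) = x. -/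
open MvPolynomial

lemma aux_C_fix {K : Type*} [Field K]
    (σ : MvPolynomial (Fin 2) K ≃ₐ[K] MvPolynomial (Fin 2) K) (a : K) :
    σ (C a) = C a := by
  rw [← MvPolynomial.algebraMap_eq]; exact σ.commutes a

/-- elementary triangular automorphism -/
lemma aux_elem {K : Type*} [Field K] (p : Polynomial K) (c : K) (hc : c ≠ 0) :
    ∃ τ : MvPolynomial (Fin 2) K ≃ₐ[K] MvPolynomial (Fin 2) K,
      τ (X 1) = X 0 ∧
      τ (Polynomial.aeval (X 1 : MvPolynomial (Fin 2) K) p + C c * X 0) = X 1 := by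
  set u : MvPolynomial (Fin 2) K :=
    C c⁻¹ * (X 1 - Polynomial.aeval (X 0 : MvPolynomial (Fin 2) K) p) with hu
  set f : MvPolynomial (Fin 2) K →ₐ[K] MvPolynomial (Fin 2) K := aeval ![u, X 0] with hf
  set gi : MvPolynomial (Fin 2) K →ₐ[K] MvPolynomial (Fin 2) K :=
    aeval ![X 1, C c * X 0 + Polynomial.aeval (X 1 : MvPolynomial (Fin 2) K) p] with hgi
  have hCc : (C c : MvPolynomial (Fin 2) K) * C c⁻¹ = 1 := by
    rw [← C_mul, mul_inv_cancel₀ hc, C_1]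
  have key : f (Polynomial.aeval (X 1 : MvPolynomial (Fin 2) K) p + C c * X 0) = X 1 := by
    simp only [map_add, map_mul, hf, aeval_X, Matrix.cons_val_zero, Matrix.cons_val_one,
      Matrix.head_cons, ← Polynomial.aeval_algHom_apply, aeval_C, MvPolynomial.algebraMap_eq]
    rw [hu, ← mul_assoc, hCc, one_mul]
    ring
  have hfg : f.comp gi = AlgHom.id K _ := by
    apply MvPolynomial.algHom_ext
    intro i
    fin_cases i
    · show f (gi (X 0)) = X 0
      simp [hf, hgi]
    · show f (gi (X 1)) = X 1
      have : gi (X 1) = C c * X 0 + Polynomial.aeval (X 1 : MvPolynomial (Fin 2) K) p := by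
        simp [hgi]
      rw [this, show (C c * X 0 + Polynomial.aeval (X 1 : MvPolynomial (Fin 2) K) p)
        = Polynomial.aeval (X 1 : MvPolynomial (Fin 2) K) p + C c * X 0 from add_comm _ _]
      exact key
  have hgf : gi.comp f = AlgHom.id K _ := by
    apply MvPolynomial.algHom_ext
    intro i
    fin_cases i
    · show gi (f (X 0)) = X 0
      have : f (X 0) = u := by simp [hf]
      rw [this, hu]
      simp only [map_mul, map_sub, hgi, aeval_X, Matrix.cons_val_zero, Matrix.cons_val_one,
        Matrix.head_cons, ← Polynomial.aeval_algHom_apply, aeval_C, MvPolynomial.algebraMap_eq]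
      rw [add_sub_cancel_right, ← mul_assoc, ← C_mul, inv_mul_cancel₀ hc, C_1, one_mul]
    · show gi (f (X 1)) = X 1
      simp [hf, hgi]
  refine ⟨AlgEquiv.ofAlgHom f gi hfg hgf, ?_, key⟩
  simp [hf]

lemma aux_step {K : Type*} [Field K] (n : ℕ) (a : ℕ → K) (a0 : K) (hc : a n ≠ 0)
    (P Q R : MvPolynomial (Fin 2) K)
    (hR : R = Q ^ n + (∑ i ∈ Finset.Icc 2 (n - 1), C (a i) * Q ^ (n - i))
        + C (a n) * P + C a0)
    (σ : MvPolynomial (Fin 2) K ≃ₐ[K] MvPolynomial (Fin 2) K)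
    (hQ : σ Q = X 1) (hP : σ P = X 0) :
    ∃ σ' : MvPolynomial (Fin 2) K ≃ₐ[K] MvPolynomial (Fin 2) K,
      σ' R = X 1 ∧ σ' Q = X 0 := by
  set p : Polynomial K := Polynomial.X ^ n
      + (∑ i ∈ Finset.Icc 2 (n - 1), Polynomial.C (a i) * Polynomial.X ^ (n - i))
      + Polynomial.C a0 with hp
  obtain ⟨τ, hτ1, hτ2⟩ := aux_elem p (a n) hc
  refine ⟨σ.trans τ, ?_, ?_⟩
  · have hσR : σ R = Polynomial.aeval (X 1 : MvPolynomial (Fin 2) K) p + C (a n) * X 0 := by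
      rw [hR]
      simp only [map_add, map_mul, map_pow, map_sum, aux_C_fix, hQ, hP, hp,
        Polynomial.aeval_X, Polynomial.aeval_C, map_mul, map_add,
        MvPolynomial.algebraMap_eq]
      ring
    simp [AlgEquiv.trans_apply, hσR, hτ2]
  · simp [AlgEquiv.trans_apply, hQ, hτ1]


/-- If `g_0 = x`, `g_1 = y` and each `g_{k+1}` is obtained from `g_k, g_{k-1}` by
`g_{k+1} = g_k^{e_k} + a^k_2 g_k^{e_k−2} + ⋯ + a^k_{e_k−1} g_k + a^k_{e_k} g_{k−1} + a_k`
with constants `a^k_i, a_k ∈ K` and `a^k_{e_k} ≠ 0`, then there is a `K`-algebra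
automorphism `σ` of `K[x,y]` with `σ(g_{h+1}) = y` and `σ(g_h) = x`. -/
theorem exists_automorphism_sending_to_coordinates (K : Type*) [Field K] [CharZero K]
    (h : ℕ) (hh : 1 ≤ h) (e : ℕ → ℕ) (he : ∀ k, 1 ≤ k → k ≤ h → 2 ≤ e k)
    (g : ℕ → MvPolynomial (Fin 2) K)
    (hg0 : g 0 = MvPolynomial.X 0) (hg1 : g 1 = MvPolynomial.X 1)
    (hrec : ∀ k, 1 ≤ k → k ≤ h → ∃ (a : ℕ → K) (a0 : K), a (e k) ≠ 0 ∧
      g (k + 1) = g k ^ (e k)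
        + (∑ i ∈ Finset.Icc 2 (e k - 1), MvPolynomial.C (a i) * g k ^ (e k - i))
        + MvPolynomial.C (a (e k)) * g (k - 1)
        + MvPolynomial.C a0) :
    ∃ σ : MvPolynomial (Fin 2) K ≃ₐ[K] MvPolynomial (Fin 2) K,
      σ (g (h + 1)) = MvPolynomial.X 1 ∧ σ (g h) = MvPolynomial.X 0 := by
  suffices H : ∀ k, 1 ≤ k → k ≤ h →
      ∃ σ : MvPolynomial (Fin 2) K ≃ₐ[K] MvPolynomial (Fin 2) K,
        σ (g (k + 1)) = MvPolynomial.X 1 ∧ σ (g k) = MvPolynomial.X 0 from H h hh le_rfl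
  intro k hk
  induction k, hk using Nat.le_induction with
  | base =>
    intro h1
    obtain ⟨a, a0, hane, heq⟩ := hrec 1 le_rfl h1
    refine aux_step (e 1) a a0 hane (g 0) (g 1) (g 2) (by rw [heq]) (AlgEquiv.refl) ?_ ?_
    · simp [hg1]
    · simp [hg0]
  | succ k hk IH =>
    intro hk1
    obtain ⟨σ, hσ1, hσ0⟩ := IH (le_trans (Nat.le_succ k) hk1)
    obtain ⟨a, a0, hane, heq⟩ := hrec (k + 1) (Nat.le_add_left 1 k) hk1
    exact aux_step (e (k + 1)) a a0 hane (g k) (g (k + 1)) (g (k + 2)) (by simpa using heq)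
      σ hσ1 hσ0
end

section
/- Let K be an algebraically closed field of characteristic zero and let a ∈ K with a ≠ 0. Set z(t) = t³ − a, x(t) = t·z(t) = t⁴ − at, and y(t) = z(t)² + (a/2)·z(t) in K[t]. Then the K-subalgebra of K[t] generated by x(t) and y(t) equals the K-subalgebra of K[t] generated by x(t) and z(t); that is, K[x(t), y(t)] = K[x(t), z(t)]. -/
open Polynomial

/-- With `z(t) = t³ − a` (`a ≠ 0`), `x(t) = t·z(t)` and `y(t) = z(t)² + (a/2)·z(t)`,
the `K`-subalgebras `K[x(t), y(t)]` and `K[x(t), z(t)]` of `K[t]` coincide. -/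
theorem adjoin_xy_eq_adjoin_xz (K : Type*) [Field K] [IsAlgClosed K] [CharZero K]
    (a : K) (ha : a ≠ 0) (z x y : Polynomial K)
    (hz : z = X ^ 3 - C a) (hx : x = X * z) (hy : y = z ^ 2 + C (a / 2) * z) :
    Algebra.adjoin K ({x, y} : Set (Polynomial K))
      = Algebra.adjoin K ({x, z} : Set (Polynomial K)) := by
  have hxm1 : x ∈ Algebra.adjoin K ({x, z} : Set (Polynomial K)) :=
    Algebra.subset_adjoin (by simp)
  have hzm : z ∈ Algebra.adjoin K ({x, z} : Set (Polynomial K)) :=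
    Algebra.subset_adjoin (by simp)
  have hxm2 : x ∈ Algebra.adjoin K ({x, y} : Set (Polynomial K)) :=
    Algebra.subset_adjoin (by simp)
  have hym : y ∈ Algebra.adjoin K ({x, y} : Set (Polynomial K)) :=
    Algebra.subset_adjoin (by simp)
  have ha3 : (C (a ^ 3) : Polynomial K) ≠ 0 := by
    simpa using pow_ne_zero 3 ha
  have key2 : z = C (2 / a) * y - C (8 / a ^ 3) * (y ^ 2 - x ^ 3) := by
    apply mul_left_cancel₀ ha3
    rw [mul_sub, ← mul_assoc, ← mul_assoc, ← C_mul, ← C_mul]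
    have e1 : a ^ 3 * (2 / a) = 2 * a ^ 2 := by field_simp
    have e2 : a ^ 3 * (8 / a ^ 3) = 8 := by field_simp
    rw [e1, e2]
    have hq : (C a : Polynomial K) = 2 * C (a / 2) := by
      rw [show (2 : Polynomial K) = C 2 from (map_ofNat C 2).symm, ← C_mul]
      congr 1
      field_simp
    subst hz hx hy
    simp only [C_mul, C_pow, map_ofNat]
    rw [hq]
    ring
  apply le_antisymm
  · rw [Algebra.adjoin_le_iff]
    rintro p hp
    simp only [Set.mem_insert_iff, Set.mem_singleton_iff] at hp
    rcases hp with rfl | rfl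
    · exact hxm1
    · rw [hy, ← smul_eq_C_mul]
      exact add_mem (pow_mem hzm 2) (Subalgebra.smul_mem _ hzm _)
  · rw [Algebra.adjoin_le_iff]
    rintro p hp
    simp only [Set.mem_insert_iff, Set.mem_singleton_iff] at hp
    rcases hp with rfl | rfl
    · exact hxm2
    · rw [key2, ← smul_eq_C_mul, ← smul_eq_C_mul]
      exact sub_mem (Subalgebra.smul_mem _ hym _)
        (Subalgebra.smul_mem _ (sub_mem (pow_mem hym 2) (pow_mem hxm2 3)) _)
end
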